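/- arXiv:1508.00041 — 8 statements merged into one kernel-verified Lean document; each statement's English description precedes it below -/
import Mathlib

section
/- Let D be a division ring and m, n positive integers. For every left submodule I of M_{m×n}(D) (an additive subgroup with M_m(D)·I ⊆ I) there exists a unique left row reduced echelon matrix R ∈ M_n(D) such that I = M_{m×n}(D)·R := {X·R : X ∈ M_{m×n}(D)}. -/
open Matrix Pointwise

/-- The left row space of a matrix: the span of its rows in the left `D`-module of
row vectors `Fin n → D`. -/
def LRS {D : Type*} [DivisionRing D] {ι : Type*} {n : ℕ} (A : Matrix ι (Fin n) D) :
    Submodule D (Fin n → D) :=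
  Submodule.span D (Set.range A)

/-- The right column space of a matrix: the span of its columns in the right `D`-module
(i.e. `Dᵐᵒᵖ`-module) of column vectors `Fin m → D`. -/
def RCS {D : Type*} [DivisionRing D] {ι : Type*} {m : ℕ} (A : Matrix (Fin m) ι D) :
    Submodule Dᵐᵒᵖ (Fin m → D) :=
  Submodule.span Dᵐᵒᵖ (Set.range Aᵀ)

/-- `R` is a left row reduced echelon matrix: for some `t ≤ m`, the rows with (0-based)
index `≥ t` are zero, each of the first `t` rows has first nonzero entry `1`, located in
column `k i`, the `k i` are strictly increasing, and column `k i` is zero outside row `i`. -/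
def IsRowReducedEchelon {D : Type*} [DivisionRing D] {m n : ℕ}
    (R : Matrix (Fin m) (Fin n) D) : Prop :=
  ∃ (t : ℕ) (ht : t ≤ m) (k : Fin t → Fin n),
    StrictMono k ∧
    (∀ i : Fin m, t ≤ (i : ℕ) → R i = 0) ∧
    (∀ i : Fin t, R (Fin.castLE ht i) (k i) = 1) ∧
    (∀ (i : Fin t) (j : Fin n), (j : ℕ) < (k i : ℕ) → R (Fin.castLE ht i) j = 0) ∧
    (∀ (i : Fin t) (p : Fin m), (p : ℕ) ≠ (i : ℕ) → R p (k i) = 0)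

/-- `C` is a right column reduced echelon matrix: its transpose is left row reduced
echelon (columns of `C` beyond the first `t` are zero, each of the first `t` columns has
first-from-the-top nonzero entry `1` located in row `k j`, the `k j` strictly increase,
and row `k j` is zero outside column `j`). -/
def IsColReducedEchelon {D : Type*} [DivisionRing D] {m n : ℕ}
    (C : Matrix (Fin m) (Fin n) D) : Prop :=
  IsRowReducedEchelon Cᵀ

/-- `A` is upper triangular: the `(i,j)` entry vanishes whenever `i > j`. -/
def IsUpperTriangular {D : Type*} [Zero D] {m n : ℕ} (A : Matrix (Fin m) (Fin n) D) : Prop :=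
  ∀ (i : Fin m) (j : Fin n), (j : ℕ) < (i : ℕ) → A i j = 0

/-- The index at which block `i` of the partition `M` starts. -/
def blockStart {r : ℕ} (M : Fin r → ℕ) (i : Fin r) : ℕ :=
  ∑ t ∈ Finset.Iio i, M t

theorem blockStart_add_lt {r : ℕ} (M : Fin r → ℕ) (i : Fin r) (a : Fin (M i)) :
    blockStart M i + (a : ℕ) < ∑ t, M t := by
  have h2 : (a : ℕ) < M i := a.2
  have h1 : blockStart M i + M i ≤ ∑ t, M t := by
    have hins : i ∉ Finset.Iio i := by simp
    calc blockStart M i + M i = ∑ t ∈ insert i (Finset.Iio i), M t := by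
          rw [Finset.sum_insert hins, blockStart, add_comm]
      _ ≤ ∑ t, M t := Finset.sum_le_sum_of_subset (Finset.subset_univ _)
  omega

/-- The global (row or column) index of the `a`-th entry of the `i`-th block of the
partition `M`. -/
def blockIdx {r : ℕ} (M : Fin r → ℕ) (i : Fin r) (a : Fin (M i)) : Fin (∑ t, M t) :=
  ⟨blockStart M i + (a : ℕ), blockStart_add_lt M i a⟩

/-- Membership in the nest module `T_{(M,N)}(D)`: the `(i,j)` block vanishes whenever
`i > j`. -/
def IsNest {D : Type*} [Zero D] {r s : ℕ} (M : Fin r → ℕ) (N : Fin s → ℕ)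
    (A : Matrix (Fin (∑ t, M t)) (Fin (∑ t, N t)) D) : Prop :=
  ∀ (i : Fin r) (j : Fin s) (a : Fin (M i)) (b : Fin (N j)),
    (j : ℕ) < (i : ℕ) → A (blockIdx M i a) (blockIdx N j b) = 0

/-- The `i`-th block row of a matrix whose rows are partitioned according to `M`. -/
def blockRow {D : Type*} {r n : ℕ} (M : Fin r → ℕ)
    (A : Matrix (Fin (∑ t, M t)) (Fin n) D) (i : Fin r) :
    Matrix (Fin (M i)) (Fin n) D :=
  fun a q => A (blockIdx M i a) q

/-- The `j`-th block column of a matrix whose columns are partitioned according to `N`. -/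
def blockCol {D : Type*} {s m : ℕ} (N : Fin s → ℕ)
    (A : Matrix (Fin m) (Fin (∑ t, N t)) D) (j : Fin s) :
    Matrix (Fin m) (Fin (N j)) D :=
  fun p b => A p (blockIdx N j b)

/-!
The rows of the matrices in `I` span a subspace `V ⊆ Dⁿ`, and because `I` is stable under
left multiplication by the matrix units `E_pq`, `I` consists exactly of the matrices all of whose
rows lie in `V`. Likewise `M_{m×n}(D)·R` consists of the matrices whose rows lie in the row space
of `R`, and for `m > 0` the set of matrices with rows in `V` determines `V`. So it suffices to
show that every subspace `V` is the row space of exactly one reduced echelon matrix.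

Call `c` a pivot of `V` if some vector of `V` has its leading entry at `c`. A vector of `V`
vanishing at every pivot is zero, since its leading entry would sit at a pivot. By back
substitution from the last pivot, each pivot `c` carries a vector of `V` that is `1` at `c` and
`0` at the other pivots; listed in pivot order and padded with zero rows, these vectors form a
reduced echelon matrix with row space `V`. Conversely, the pivot columns of a reduced echelon
matrix are the pivots of its row space, and two such matrices with the same row space differ by
rows of that space vanishing at all pivots.
-/

section Pivots

variable {ι : Type*} [LinearOrder ι] [Fintype ι]

section Semiring

variable {R : Type*} [Semiring R]

open Classical in
noncomputable def pivotSet (V : Submodule R (ι → R)) : Finset ι :=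
  {c | ∃ v ∈ V, (∀ j < c, v j = 0) ∧ v c ≠ 0}

variable {V : Submodule R (ι → R)}

theorem mem_pivotSet {c : ι} :
    c ∈ pivotSet V ↔ ∃ v ∈ V, (∀ j < c, v j = 0) ∧ v c ≠ 0 := by
  classical simp [pivotSet]

theorem exists_mem_pivotSet_of_ne_zero {v : ι → R} (hv : v ∈ V) (h0 : v ≠ 0) :
    ∃ c ∈ pivotSet V, (∀ j < c, v j = 0) ∧ v c ≠ 0 := by
  obtain ⟨c, hc⟩ :=
    (row_ne_zero_iff_exists_isLeadingEntry (A := replicateRow Unit v) (i := ())).1 h0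
  exact ⟨c, mem_pivotSet.2 ⟨v, hv, hc⟩, hc⟩

theorem eq_zero_of_forall_pivotSet {v : ι → R} (hv : v ∈ V)
    (h : ∀ c ∈ pivotSet V, v c = 0) : v = 0 := by
  by_contra h0
  obtain ⟨c, hc, -, hvc⟩ := exists_mem_pivotSet_of_ne_zero hv h0
  exact hvc (h c hc)

variable (V) in
/-- The row that a reduced row echelon matrix with row space `V` has at the pivot `c`. -/
structure IsPivotVector (c : ι) (w : ι → R) : Prop where
  mem : w ∈ V
  apply_self : w c = 1
  apply_of_ne : ∀ j ∈ pivotSet V, j ≠ c → w j = 0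

theorem IsPivotVector.apply_of_mem {c j : ι} {w : ι → R} (hw : IsPivotVector V c w)
    (hj : j ∈ pivotSet V) : w j = if j = c then 1 else 0 := by
  split_ifs with hjc
  · exact hjc ▸ hw.apply_self
  · exact hw.apply_of_ne j hj hjc

theorem IsPivotVector.apply_of_lt [Nontrivial R] {c : ι} {w : ι → R}
    (hw : IsPivotVector V c w) : ∀ j < c, w j = 0 := by
  have hw0 : w ≠ 0 := fun h => by simpa [h] using hw.apply_self
  obtain ⟨c', hc', hlt, hwc'⟩ := exists_mem_pivotSet_of_ne_zero hw.mem hw0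
  obtain rfl : c' = c := by_contra fun hne => hwc' (hw.apply_of_ne c' hc' hne)
  exact hlt

end Semiring

theorem eq_sum_smul_of_isPivotVector {R : Type*} [Ring R]
    {V : Submodule R (ι → R)} {t : ℕ} {k : Fin t → ι} (hk : Function.Injective k)
    (hP : ∀ j, j ∈ pivotSet V ↔ j ∈ Set.range k) {w : Fin t → ι → R}
    (hw : ∀ i, IsPivotVector V (k i) (w i)) {v : ι → R} (hv : v ∈ V) :
    v = ∑ i, v (k i) • w i := by
  refine sub_eq_zero.1 (eq_zero_of_forall_pivotSet
    (sub_mem hv (sum_mem fun i _ => V.smul_mem _ (hw i).mem)) fun j hj => ?_)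
  obtain ⟨i', rfl⟩ := (hP j).1 hj
  simp [Finset.sum_apply, (hw _).apply_of_mem hj, hk.eq_iff]

theorem exists_isPivotVector {D : Type*} [DivisionRing D] {V : Submodule D (ι → D)} {c : ι}
    (hc : c ∈ pivotSet V) : ∃ w, IsPivotVector V c w := by
  induction c using WellFoundedGT.induction with
  | _ c ih =>
  classical
  obtain ⟨u, huV, hu_lt, huc⟩ := mem_pivotSet.1 hc
  set S := (pivotSet V).filter (c < ·)
  have hW : ∀ l ∈ S, ∃ w, IsPivotVector V l w := fun l hl => by
    rw [Finset.mem_filter] at hl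
    exact ih l hl.2 hl.1
  choose! W hS using hW
  set v := u - ∑ l ∈ S, u l • W l
  have hsum : ∀ j ∈ pivotSet V, (∑ l ∈ S, u l • W l) j = if j ∈ S then u j else 0 := by
    intro j hj
    rw [Finset.sum_apply, Finset.sum_congr rfl fun l hl => by
      rw [Pi.smul_apply, (hS l hl).apply_of_mem hj]]
    simp
  have hvV : v ∈ V := V.sub_mem huV (V.sum_mem fun l hl => V.smul_mem _ (hS l hl).mem)
  have hvc : v c = u c := by
    simp [v, hsum c hc, S]
  have hv : ∀ j ∈ pivotSet V, j ≠ c → v j = 0 := by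
    intro j hj hjc
    rcases hjc.lt_or_gt with hlt | hgt
    · simp [v, hsum j hj, S, hu_lt j hlt, hlt.not_gt]
    · simp [v, hsum j hj, S, hj, hgt]
  exact ⟨(u c)⁻¹ • v, V.smul_mem _ hvV, by simp [hvc, huc], fun j hj hjc => by simp [hv j hj hjc]⟩

end Pivots

section RowReducedEchelon

variable {D : Type*} [DivisionRing D] {m n t : ℕ}

structure IsRowReducedEchelonWith (R : Matrix (Fin m) (Fin n) D) (ht : t ≤ m)
    (k : Fin t → Fin n) : Prop where
  strictMono : StrictMono k
  row_eq_zero : ∀ i : Fin m, t ≤ (i : ℕ) → R i = 0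
  apply_pivot : ∀ i : Fin t, R (Fin.castLE ht i) (k i) = 1
  apply_lt_pivot :
    ∀ (i : Fin t) (j : Fin n), (j : ℕ) < (k i : ℕ) → R (Fin.castLE ht i) j = 0
  apply_pivot_of_ne : ∀ (i : Fin t) (p : Fin m), (p : ℕ) ≠ (i : ℕ) → R p (k i) = 0

theorem isRowReducedEchelon_iff {R : Matrix (Fin m) (Fin n) D} :
    IsRowReducedEchelon R ↔ ∃ (t : ℕ) (ht : t ≤ m) (k : Fin t → Fin n),
      IsRowReducedEchelonWith R ht k :=
  ⟨fun ⟨t, ht, k, h₁, h₂, h₃, h₄, h₅⟩ => ⟨t, ht, k, h₁, h₂, h₃, h₄, h₅⟩,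
    fun ⟨t, ht, k, h₁, h₂, h₃, h₄, h₅⟩ => ⟨t, ht, k, h₁, h₂, h₃, h₄, h₅⟩⟩

namespace IsRowReducedEchelonWith

variable {R : Matrix (Fin m) (Fin n) D} {ht : t ≤ m} {k : Fin t → Fin n}

theorem apply_pivot_eq_ite (hR : IsRowReducedEchelonWith R ht k) (p : Fin m) (i : Fin t) :
    R p (k i) = if p = Fin.castLE ht i then 1 else 0 := by
  split_ifs with hp
  · exact hp ▸ hR.apply_pivot i
  · exact hR.apply_pivot_of_ne i p fun h => hp (Fin.ext h)

theorem sum_smul_row_apply_pivot (hR : IsRowReducedEchelonWith R ht k) (c : Fin m → D)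
    (i : Fin t) : (∑ p, c p • R p) (k i) = c (Fin.castLE ht i) := by
  simp [Finset.sum_apply, hR.apply_pivot_eq_ite]

theorem mem_pivotSet_LRS_iff (hR : IsRowReducedEchelonWith R ht k) {j : Fin n} :
    j ∈ pivotSet (LRS R) ↔ j ∈ Set.range k := by
  constructor
  · intro hj
    obtain ⟨v, hv, hv_lt, hvj⟩ := mem_pivotSet.1 hj
    obtain ⟨c, rfl⟩ := (Submodule.mem_span_range_iff_exists_fun D).1 hv
    obtain ⟨p, -, hp⟩ : ∃ p ∈ Finset.univ, c p * R p j ≠ 0 :=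
      Finset.exists_ne_zero_of_sum_ne_zero (by simpa [Finset.sum_apply] using hvj)
    have hRp : R p ≠ 0 := fun h => hp (by simp [h])
    obtain ⟨i, rfl⟩ : ∃ i : Fin t, Fin.castLE ht i = p :=
      ⟨⟨p, not_le.1 fun h => hRp (hR.row_eq_zero p h)⟩, rfl⟩
    have hkj : k i ≤ j := not_lt.1 fun h => hp (by simp [hR.apply_lt_pivot i j h])
    refine ⟨i, hkj.eq_of_not_lt fun h => hp ?_⟩
    rw [← hR.sum_smul_row_apply_pivot c i, hv_lt _ h, zero_mul]
  · rintro ⟨i, rfl⟩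
    refine mem_pivotSet.2 ⟨R (Fin.castLE ht i), Submodule.subset_span ⟨_, rfl⟩,
      fun j hj => hR.apply_lt_pivot i j hj, ?_⟩
    rw [hR.apply_pivot i]
    exact one_ne_zero

theorem pivotSet_LRS (hR : IsRowReducedEchelonWith R ht k) :
    pivotSet (LRS R) = Finset.univ.image k := by
  ext j
  simp [hR.mem_pivotSet_LRS_iff]

end IsRowReducedEchelonWith

theorem IsRowReducedEchelon.eq_of_LRS_eq {R R' : Matrix (Fin m) (Fin n) D}
    (hR : IsRowReducedEchelon R) (hR' : IsRowReducedEchelon R') (h : LRS R = LRS R') :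
    R = R' := by
  obtain ⟨t, ht, k, hR⟩ := isRowReducedEchelon_iff.1 hR
  obtain ⟨t', ht', k', hR'⟩ := isRowReducedEchelon_iff.1 hR'
  have hP := hR.pivotSet_LRS
  rw [h, hR'.pivotSet_LRS] at hP
  obtain rfl : t' = t := by
    simpa [Finset.card_image_of_injective _ hR.strictMono.injective,
      Finset.card_image_of_injective _ hR'.strictMono.injective] using congrArg Finset.card hP
  obtain rfl : k' = k := (hR'.strictMono.range_inj hR.strictMono).1 <| by
    simpa [Set.image_univ] using congrArg (fun s : Finset (Fin n) => (s : Set (Fin n))) hP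
  funext p
  refine sub_eq_zero.1 (eq_zero_of_forall_pivotSet (V := LRS R)
    (sub_mem (Submodule.subset_span ⟨p, rfl⟩) (h ▸ Submodule.subset_span ⟨p, rfl⟩)) ?_)
  intro j hj
  obtain ⟨i, rfl⟩ := hR.mem_pivotSet_LRS_iff.1 hj
  rw [Pi.sub_apply, hR.apply_pivot_eq_ite, hR'.apply_pivot_eq_ite, sub_self]

theorem exists_isRowReducedEchelon_LRS_eq (V : Submodule D (Fin n → D)) :
    ∃ R : Matrix (Fin n) (Fin n) D, IsRowReducedEchelon R ∧ LRS R = V := by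
  set P := pivotSet V
  have ht : P.card ≤ n := by simpa using P.card_le_univ
  set k := P.orderEmbOfFin rfl
  have hP : ∀ j, j ∈ P ↔ j ∈ Set.range k := by simp [k, Finset.range_orderEmbOfFin]
  choose w hw using fun i => exists_isPivotVector (P.orderEmbOfFin_mem rfl i)
  set R : Matrix (Fin n) (Fin n) D := Function.extend (Fin.castLE ht) w 0
  have hR_castLE : ∀ i, R (Fin.castLE ht i) = w i := (Fin.castLE_injective ht).extend_apply w 0
  have hR_of_le : ∀ p : Fin n, P.card ≤ p → R p = 0 := fun p hp =>
    Function.extend_apply' _ _ _ <| by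
      rintro ⟨i, rfl⟩
      exact i.2.not_ge hp
  have hR_mem : ∀ p, R p ∈ V := fun p => by
    by_cases hp : (p : ℕ) < P.card
    · exact hR_castLE ⟨p, hp⟩ ▸ (hw _).mem
    · exact hR_of_le p (not_lt.1 hp) ▸ V.zero_mem
  refine ⟨R, isRowReducedEchelon_iff.2 ⟨_, ht, k, ⟨k.strictMono, hR_of_le, fun i => ?_,
    fun i j hj => ?_, fun i p hp => ?_⟩⟩, le_antisymm ?_ fun v hv => ?_⟩
  · exact (hR_castLE i).symm ▸ (hw i).apply_self
  · exact (hR_castLE i).symm ▸ (hw i).apply_of_lt j hj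
  · by_cases hpt : (p : ℕ) < P.card
    · have hne : k i ≠ k ⟨p, hpt⟩ := k.injective.ne fun h => hp (congrArg Fin.val h).symm
      exact (hR_castLE ⟨p, hpt⟩).symm ▸ (hw _).apply_of_ne _ ((hP _).2 ⟨i, rfl⟩) hne
    · rw [hR_of_le p (not_lt.1 hpt), Pi.zero_apply]
  · exact Submodule.span_le.2 (Set.range_subset_iff.2 hR_mem)
  · rw [eq_sum_smul_of_isPivotVector k.injective hP hw hv]
    exact sum_mem fun i _ => Submodule.smul_mem _ _ (hR_castLE i ▸ Submodule.subset_span ⟨_, rfl⟩)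

end RowReducedEchelon

section RowSpace

variable {R m n : Type*}

theorem range_mul_right_eq [Semiring R] {k : Type*} [Fintype k] (B : Matrix k n R) :
    Set.range (fun X : Matrix m k R => X * B) =
      {A | ∀ p, A p ∈ Submodule.span R (Set.range B.row)} := by
  ext A
  simp only [Set.mem_range, Set.mem_ofPred, Submodule.mem_span_range_iff_exists_fun, row_def,
    ← vecMul_eq_sum]
  constructor
  · rintro ⟨X, rfl⟩ p
    exact ⟨X p, rfl⟩
  · intro h
    choose X hX using h
    exact ⟨X, funext hX⟩

theorem setOf_forall_row_mem_injective [Semiring R] [Nonempty m] :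
    Function.Injective fun W : Submodule R (n → R) => {A : Matrix m n R | ∀ p, A p ∈ W} := by
  intro W W' h
  ext v
  have : (∀ _ : m, v ∈ W) ↔ ∀ _ : m, v ∈ W' := Set.ext_iff.1 h (replicateRow m v)
  simpa only [forall_const] using this

variable [Ring R]

def AddSubgroup.rowSpan (I : AddSubgroup (Matrix m n R)) : Submodule R (n → R) :=
  Submodule.span R {v | ∃ A ∈ I, ∃ p, A p = v}

variable [Fintype m] [DecidableEq m] {I : AddSubgroup (Matrix m n R)}

theorem updateRow_zero_mem_of_mem_rowSpan (hI : ∀ (P : Matrix m m R) A, A ∈ I → P * A ∈ I)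
    {v : n → R} (hv : v ∈ I.rowSpan) (p : m) : updateRow 0 p v ∈ I := by
  induction hv using Submodule.span_induction with
  | mem v hv =>
    obtain ⟨A, hA, q, rfl⟩ := hv
    simpa [single_mul_eq_updateRow_zero, Matrix.row] using hI (single p q 1) A hA
  | zero => simp
  | add v w _ _ hv hw =>
    convert I.add_mem hv hw using 1
    ext i j
    by_cases hi : i = p <;> simp [updateRow_apply, hi]
  | smul a v _ hv =>
    simpa [single_mul_eq_updateRow_zero, Matrix.row] using hI (single p p a) _ hv

theorem mem_iff_forall_row_mem_rowSpan (hI : ∀ (P : Matrix m m R) A, A ∈ I → P * A ∈ I)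
    (A : Matrix m n R) : A ∈ I ↔ ∀ p, A p ∈ I.rowSpan := by
  refine ⟨fun hA p => Submodule.subset_span ⟨A, hA, p, rfl⟩, fun h => ?_⟩
  rw [← Finset.univ_sum_single A]
  exact I.sum_mem fun p _ => updateRow_zero_mem_of_mem_rowSpan hI (h p) p

end RowSpace

theorem exists_unique_rowReducedEchelon_of_leftSubmodule_general
    (D : Type*) [DivisionRing D] (m n : ℕ) (hm : 0 < m)
    (I : AddSubgroup (Matrix (Fin m) (Fin n) D))
    (hI : ∀ (P : Matrix (Fin m) (Fin m) D) (A : Matrix (Fin m) (Fin n) D),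
      A ∈ I → P * A ∈ I) :
    ∃! R : Matrix (Fin n) (Fin n) D, IsRowReducedEchelon R ∧
      (I : Set (Matrix (Fin m) (Fin n) D)) =
        Set.range (fun X : Matrix (Fin m) (Fin n) D => X * R) := by
  have : Nonempty (Fin m) := ⟨⟨0, hm⟩⟩
  have hrange (R : Matrix (Fin n) (Fin n) D) :
      Set.range (fun X : Matrix (Fin m) (Fin n) D => X * R) = {A | ∀ p, A p ∈ LRS R} :=
    range_mul_right_eq R
  have hI_eq : (I : Set (Matrix (Fin m) (Fin n) D)) = {A | ∀ p, A p ∈ I.rowSpan} :=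
    Set.ext (mem_iff_forall_row_mem_rowSpan hI)
  obtain ⟨R, hR, hRI⟩ := exists_isRowReducedEchelon_LRS_eq I.rowSpan
  refine ⟨R, ⟨hR, by rw [hI_eq, hrange, hRI]⟩, fun R' ⟨hR', hR'I⟩ => ?_⟩
  refine hR'.eq_of_LRS_eq hR (setOf_forall_row_mem_injective (m := Fin m) ?_)
  simp only [← hrange, ← hR'I, hI_eq, hRI]

/-- Every left submodule `I` of `M_{m×n}(D)` is of the form
`M_{m×n}(D)·R` for a unique left row reduced echelon matrix `R ∈ M_n(D)`. -/
theorem exists_unique_rowReducedEchelon_of_leftSubmodule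
    (D : Type*) [DivisionRing D] (m n : ℕ) (hm : 0 < m) (hn : 0 < n)
    (I : AddSubgroup (Matrix (Fin m) (Fin n) D))
    (hI : ∀ (P : Matrix (Fin m) (Fin m) D) (A : Matrix (Fin m) (Fin n) D),
      A ∈ I → P * A ∈ I) :
    ∃! R : Matrix (Fin n) (Fin n) D, IsRowReducedEchelon R ∧
      (I : Set (Matrix (Fin m) (Fin n) D)) =
        Set.range (fun X : Matrix (Fin m) (Fin n) D => X * R) :=
  exists_unique_rowReducedEchelon_of_leftSubmodule_general D m n hm I hI
end

section
/- Let D be a division ring, m, n positive integers, and let R₁, R₂ ∈ M_n(D) be left row reduced echelon matrices. If R, R' ∈ M_n(D) are the (unique) left row reduced echelon matrices with LRS(R) = LRS(R₁) + LRS(R₂) and LRS(R') = LRS(R₁) ∩ LRS(R₂), then M_{m×n}(D)·R₁ + M_{m×n}(D)·R₂ = M_{m×n}(D)·R and (M_{m×n}(D)·R₁) ∩ (M_{m×n}(D)·R₂) = M_{m×n}(D)·R', where M_{m×n}(D)·S := {X·S : X ∈ M_{m×n}(D)}. -/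
open Matrix Pointwise

/- Only the row spaces matter: `Y = X * S` for some `X` iff every row of `Y` lies in `LRS S`,
so both sides of each identity are the sets of matrices all of whose rows lie in the same
subspace of row vectors. -/

theorem Set.univ_pi_add_univ_pi {ι : Type*} {α : ι → Type*} [∀ i, Add (α i)]
    (s t : ∀ i, Set (α i)) : Set.univ.pi s + Set.univ.pi t = Set.univ.pi (s + t) := by
  ext f
  constructor
  · rintro ⟨a, ha, b, hb, rfl⟩ i -
    exact Set.add_mem_add (ha i trivial) (hb i trivial)
  · intro hf
    choose a ha b hb hab using fun i => hf i trivial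
    exact ⟨a, fun i _ => ha i, b, fun i _ => hb i, funext hab⟩

theorem mem_LRS_iff_exists_vecMul {D ι : Type*} [DivisionRing D] [Fintype ι] {n : ℕ}
    (S : Matrix ι (Fin n) D) (y : Fin n → D) : y ∈ LRS S ↔ ∃ x : ι → D, x ᵥ* S = y := by
  simp only [vecMul_eq_sum]
  exact Submodule.mem_span_range_iff_exists_fun D

theorem range_mul_right_eq_univ_pi_LRS {D ι κ : Type*} [DivisionRing D] [Fintype ι] {n : ℕ}
    (S : Matrix ι (Fin n) D) :
    Set.range (fun X : Matrix κ ι D => X * S) = Set.univ.pi fun _ : κ => (LRS S : Set _) := by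
  ext Y
  change (∃ X, X * S = Y) ↔ ∀ p ∈ Set.univ, Y p ∈ LRS S
  simp only [Set.mem_univ, forall_const, mem_LRS_iff_exists_vecMul, Classical.skolem]
  exact ⟨fun ⟨X, hX⟩ => ⟨X, fun p => hX ▸ rfl⟩, fun ⟨X, hX⟩ => ⟨of X, funext hX⟩⟩

theorem leftSubmodule_sup_inf_rowReducedEchelon_general
    (D : Type*) [DivisionRing D] (m n : ℕ)
    (R₁ R₂ R R' : Matrix (Fin n) (Fin n) D)
    (hsup : LRS R = LRS R₁ ⊔ LRS R₂) (hinf : LRS R' = LRS R₁ ⊓ LRS R₂) :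
    Set.range (fun X : Matrix (Fin m) (Fin n) D => X * R₁) +
        Set.range (fun X : Matrix (Fin m) (Fin n) D => X * R₂) =
      Set.range (fun X : Matrix (Fin m) (Fin n) D => X * R) ∧
    Set.range (fun X : Matrix (Fin m) (Fin n) D => X * R₁) ∩
        Set.range (fun X : Matrix (Fin m) (Fin n) D => X * R₂) =
      Set.range (fun X : Matrix (Fin m) (Fin n) D => X * R') := by
  simp only [range_mul_right_eq_univ_pi_LRS, hsup, hinf, Submodule.coe_sup, Submodule.coe_inf]
  exact ⟨Set.univ_pi_add_univ_pi _ _, Set.pi_inter_distrib.symm⟩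

/-- The left submodules `M_{m×n}(D)·R₁ + M_{m×n}(D)·R₂` and
`(M_{m×n}(D)·R₁) ∩ (M_{m×n}(D)·R₂)` correspond to the row reduced echelon matrices whose
row spaces are `LRS(R₁) + LRS(R₂)` and `LRS(R₁) ∩ LRS(R₂)` respectively. -/
theorem leftSubmodule_sup_inf_rowReducedEchelon
    (D : Type*) [DivisionRing D] (m n : ℕ) (hm : 0 < m) (hn : 0 < n)
    (R₁ R₂ R R' : Matrix (Fin n) (Fin n) D)
    (h₁ : IsRowReducedEchelon R₁) (h₂ : IsRowReducedEchelon R₂)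
    (hR : IsRowReducedEchelon R) (hR' : IsRowReducedEchelon R')
    (hsup : LRS R = LRS R₁ ⊔ LRS R₂) (hinf : LRS R' = LRS R₁ ⊓ LRS R₂) :
    Set.range (fun X : Matrix (Fin m) (Fin n) D => X * R₁) +
        Set.range (fun X : Matrix (Fin m) (Fin n) D => X * R₂) =
      Set.range (fun X : Matrix (Fin m) (Fin n) D => X * R) ∧
    Set.range (fun X : Matrix (Fin m) (Fin n) D => X * R₁) ∩
        Set.range (fun X : Matrix (Fin m) (Fin n) D => X * R₂) =
      Set.range (fun X : Matrix (Fin m) (Fin n) D => X * R') :=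
  leftSubmodule_sup_inf_rowReducedEchelon_general D m n R₁ R₂ R R' hsup hinf
end

section
/- Let D be a division ring, n a positive integer, I a left ideal of M_n(D), and R ∈ M_n(D) the unique left row reduced echelon matrix with I = M_n(D)·R. If rank(R) = t, then there exists an invertible matrix P ∈ M_n(D) such that P⁻¹IP := {P⁻¹AP : A ∈ I} equals M_n(D)·E, where E ∈ M_n(D) is the diagonal matrix whose first t diagonal entries are 1 and whose remaining entries are 0; in particular E is the unique left row reduced echelon matrix associated with the left ideal P⁻¹IP. -/
open Matrix Pointwise

/-!
The left ideal `M_n(D)·R` is determined by the row space `LRS R`, and conjugating it by an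
invertible `P` gives `M_n(D)·(RP)`, whose row space is the image of `LRS R` under the
automorphism `v ↦ vP`. So it suffices to find an automorphism of `Dⁿ` carrying `LRS R` onto
`LRS E`; one exists because both subspaces have dimension `t`: match them by any isomorphism
and match complements of them likewise.
-/

theorem Submodule.exists_linearEquiv_map_eq {K V : Type*} [DivisionRing K] [AddCommGroup V]
    [Module K V] [FiniteDimensional K V] {p q : Submodule K V}
    (h : Module.finrank K p = Module.finrank K q) :
    ∃ f : V ≃ₗ[K] V, p.map (f : V →ₗ[K] V) = q := by
  obtain ⟨p', hp'⟩ := p.exists_isCompl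
  obtain ⟨q', hq'⟩ := q.exists_isCompl
  have h' : Module.finrank K p' = Module.finrank K q' := by
    have := Submodule.finrank_add_eq_of_isCompl hp'
    have := Submodule.finrank_add_eq_of_isCompl hq'
    omega
  let φ := LinearEquiv.ofFinrankEq p q h
  let f : V ≃ₗ[K] V := (p.prodEquivOfIsCompl p' hp').symm ≪≫ₗ
    φ.prodCongr (LinearEquiv.ofFinrankEq p' q' h') ≪≫ₗ q.prodEquivOfIsCompl q' hq'
  have hf : (f : V →ₗ[K] V) ∘ₗ p.subtype = q.subtype ∘ₗ (φ : p →ₗ[K] q) := by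
    ext x
    simp [f, Submodule.coe_prodEquivOfIsCompl']
  refine ⟨f, ?_⟩
  rw [← p.range_subtype, ← LinearMap.range_comp, hf, LinearMap.range_comp,
    LinearEquiv.range, Submodule.map_top, Submodule.range_subtype]

theorem conj_range_mul_right {M : Type*} [Monoid M] {P Q : M} (h : Q * P = 1) (R : M) :
    {B | ∃ A ∈ Set.range (· * R), B = Q * A * P} = Set.range (· * (R * P)) := by
  ext B
  constructor
  · rintro ⟨_, ⟨X, rfl⟩, rfl⟩
    exact ⟨Q * X, by simp only [mul_assoc]⟩
  · rintro ⟨X, rfl⟩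
    exact ⟨P * X * R, ⟨P * X, rfl⟩, by simp only [← mul_assoc, h, one_mul]⟩

theorem LinearMap.toMatrixRight'_mul_toMatrixRight'_symm {R : Type*} [Semiring R] {m : Type*}
    [Fintype m] [DecidableEq m] (f : (m → R) ≃ₗ[R] (m → R)) :
    LinearMap.toMatrixRight' (f : (m → R) →ₗ[R] (m → R)) *
      LinearMap.toMatrixRight' (f.symm : (m → R) →ₗ[R] (m → R)) = 1 := by
  rw [← toMatrixRight'_comp, LinearEquiv.symm_comp, toMatrixRight'_id]

namespace Matrix

variable {D : Type*} [DivisionRing D] {n : ℕ}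

theorem lrs_eq_range_vecMulLinear {ι : Type*} [Fintype ι] (A : Matrix ι (Fin n) D) :
    LRS A = LinearMap.range A.vecMulLinear :=
  (range_vecMulLinear A).symm

theorem exists_mul_eq_iff_forall_mem_lrs {ι κ : Type*} [Fintype ι]
    (A : Matrix ι (Fin n) D) (B : Matrix κ (Fin n) D) :
    (∃ X : Matrix κ ι D, X * A = B) ↔ ∀ p, B p ∈ LRS A := by
  simp only [lrs_eq_range_vecMulLinear, LinearMap.mem_range, vecMulLinear_apply]
  constructor
  · rintro ⟨X, rfl⟩ p
    exact ⟨X p, rfl⟩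
  · intro h
    choose X hX using h
    exact ⟨of X, funext hX⟩

theorem range_mul_right_eq_of_lrs_eq {ι κ : Type*} [Fintype ι] {A B : Matrix ι (Fin n) D}
    (h : LRS A = LRS B) :
    Set.range (fun X : Matrix κ ι D => X * A) = Set.range (fun X : Matrix κ ι D => X * B) := by
  ext C
  simp only [Set.mem_range, exists_mul_eq_iff_forall_mem_lrs, h]

theorem lrs_mul_toMatrixRight' {ι : Type*} (A : Matrix ι (Fin n) D)
    (f : (Fin n → D) →ₗ[D] (Fin n → D)) :
    LRS (A * LinearMap.toMatrixRight' f) = (LRS A).map f := by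
  have hrow : ∀ p, (A * LinearMap.toMatrixRight' f) p = f (A p) := fun p => by
    rw [mul_apply_eq_vecMul, ← toLinearMapRight'_apply, LinearEquiv.symm_apply_apply]
  rw [LRS, LRS, Submodule.map_span]
  exact congrArg _ ((congrArg Set.range (funext hrow)).trans (Set.range_comp f A))

theorem finrank_lrs_le {ι : Type*} (A : Matrix ι (Fin n) D) : Module.finrank D (LRS A) ≤ n :=
  (Submodule.finrank_le _).trans (Module.finrank_fin_fun D).le

theorem isRowReducedEchelon_diagonal_ite {t : ℕ} (htn : t ≤ n) :
    IsRowReducedEchelon (diagonal fun i : Fin n => if (i : ℕ) < t then (1 : D) else 0) := by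
  refine ⟨t, htn, Fin.castLE htn, fun _ _ h => h, ?_, ?_, ?_, ?_⟩
  · intro i hi
    ext j
    by_cases hij : i = j
    · simp [hij, Nat.not_lt.2 (hij ▸ hi)]
    · exact diagonal_apply_ne _ hij
  · intro i
    simp
  · intro i j hj
    exact diagonal_apply_ne _ (Fin.ne_of_lt hj).symm
  · intro i p hpi
    exact diagonal_apply_ne _ fun h => hpi (congrArg Fin.val h)

theorem finrank_lrs_diagonal_ite {t : ℕ} (htn : t ≤ n) :
    Module.finrank D (LRS (diagonal fun i : Fin n => if (i : ℕ) < t then (1 : D) else 0)) = t := by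
  have hspan : LRS (diagonal fun i : Fin n => if (i : ℕ) < t then (1 : D) else 0) =
      Submodule.span D (Set.range (Pi.basisFun D (Fin n) ∘ Fin.castLE htn)) := by
    have hrow : ∀ i : Fin n, (diagonal fun i : Fin n => if (i : ℕ) < t then (1 : D) else 0) i =
        Pi.single i (if (i : ℕ) < t then 1 else 0) :=
      row_diagonal _
    apply le_antisymm <;> rw [LRS, Submodule.span_le] <;> rintro _ ⟨i, rfl⟩
    · rw [hrow]
      split_ifs with hi
      · exact Submodule.subset_span ⟨⟨i, hi⟩, by simp⟩
      · simp
    · refine Submodule.subset_span ⟨Fin.castLE htn i, ?_⟩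
      simp [hrow]
  rw [hspan, finrank_span_eq_card
    ((Pi.basisFun D (Fin n)).linearIndependent.comp _ (Fin.castLE_injective htn)),
    Fintype.card_fin]

end Matrix

theorem leftIdeal_conjugate_to_diagonal_general
    (D : Type*) [DivisionRing D] (n : ℕ)
    (I : AddSubgroup (Matrix (Fin n) (Fin n) D))
    (R : Matrix (Fin n) (Fin n) D)
    (hIR : (I : Set (Matrix (Fin n) (Fin n) D)) =
      Set.range (fun X : Matrix (Fin n) (Fin n) D => X * R))
    (t : ℕ) (ht : Module.finrank D (LRS R) = t) :
    ∃ P Q : Matrix (Fin n) (Fin n) D, P * Q = 1 ∧ Q * P = 1 ∧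
      IsRowReducedEchelon
        (Matrix.diagonal (fun i : Fin n => if (i : ℕ) < t then (1 : D) else 0)) ∧
      {B : Matrix (Fin n) (Fin n) D | ∃ A ∈ I, B = Q * A * P} =
        Set.range (fun X : Matrix (Fin n) (Fin n) D =>
          X * Matrix.diagonal (fun i : Fin n => if (i : ℕ) < t then (1 : D) else 0)) := by
  have htn : t ≤ n := ht ▸ finrank_lrs_le R
  obtain ⟨f, hf⟩ := Submodule.exists_linearEquiv_map_eq (p := LRS R)
    (q := LRS (diagonal fun i : Fin n => if (i : ℕ) < t then (1 : D) else 0))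
    (by rw [ht, finrank_lrs_diagonal_ite htn])
  have hPQ := LinearMap.toMatrixRight'_mul_toMatrixRight'_symm f
  have hQP := LinearMap.toMatrixRight'_mul_toMatrixRight'_symm f.symm
  rw [LinearEquiv.symm_symm] at hQP
  refine ⟨_, _, hPQ, hQP, isRowReducedEchelon_diagonal_ite htn, ?_⟩
  simp_rw [← SetLike.mem_coe, hIR]
  rw [conj_range_mul_right hQP]
  exact range_mul_right_eq_of_lrs_eq (by rw [lrs_mul_toMatrixRight', hf])

/-- If `I = M_n(D)·R` is a left ideal of `M_n(D)` with `R` its unique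
left row reduced echelon matrix of rank `t`, then `I` is conjugate, via some invertible
`P` (with two-sided inverse `Q = P⁻¹`), to `M_n(D)·E` where `E` is the diagonal matrix
with `t` ones followed by zeros; moreover `E` is left row reduced echelon, hence is the
unique left row reduced echelon matrix associated with `P⁻¹IP`. -/
theorem leftIdeal_conjugate_to_diagonal
    (D : Type*) [DivisionRing D] (n : ℕ) (hn : 0 < n)
    (I : AddSubgroup (Matrix (Fin n) (Fin n) D))
    (hI : ∀ (P : Matrix (Fin n) (Fin n) D) (A : Matrix (Fin n) (Fin n) D),
      A ∈ I → P * A ∈ I)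
    (R : Matrix (Fin n) (Fin n) D) (hR : IsRowReducedEchelon R)
    (hIR : (I : Set (Matrix (Fin n) (Fin n) D)) =
      Set.range (fun X : Matrix (Fin n) (Fin n) D => X * R))
    (t : ℕ) (ht : Module.finrank D (LRS R) = t) :
    ∃ P Q : Matrix (Fin n) (Fin n) D, P * Q = 1 ∧ Q * P = 1 ∧
      IsRowReducedEchelon
        (Matrix.diagonal (fun i : Fin n => if (i : ℕ) < t then (1 : D) else 0)) ∧
      {B : Matrix (Fin n) (Fin n) D | ∃ A ∈ I, B = Q * A * P} =
        Set.range (fun X : Matrix (Fin n) (Fin n) D =>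
          X * Matrix.diagonal (fun i : Fin n => if (i : ℕ) < t then (1 : D) else 0)) :=
  leftIdeal_conjugate_to_diagonal_general D n I R hIR t ht
end

section
/- Let D be a division ring and M = (m_1,…,m_r), N = (n_1,…,n_s) partitions of m and n. Let (R_1,…,R_r) be any sequence of matrices in M_n(D) such that LRS(R_{i+1}) ⊆ LRS(R_i) for all 1 ≤ i < r and, for each i, the j-th block column of R_i (columns partitioned according to N) is zero for all j < i. Then the set J := {A ∈ M_{m×n}(D) : Row_i(A) ∈ M_{m_i×n}(D)·R_i for every 1 ≤ i ≤ r} is contained in T_{(M,N)}(D) and is a left submodule of T_{(M,N)}(D), i.e., an additive subgroup with T_M·J ⊆ J. -/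
/-!
Since a row of `X * R` is a left linear combination of the rows of `R`, the set `J` consists of
the matrices whose rows in block `i` lie in `LRS (R i)`, visibly a `D`-submodule. Vectors in
`LRS (R i)` vanish on the block columns `j < i` where `R i` does, which gives the nest shape.
For `P` in the nest algebra, a row in block `i` of `P * A` only combines rows of `A` from blocks
`j ≥ i`, and these lie in `LRS (R j) ≤ LRS (R i)` because the row spaces decrease.
-/

open Matrix Pointwise

theorem Fin.antitone_of_succ_le {α : Type*} [Preorder α] {r : ℕ} {f : Fin r → α}
    (h : ∀ (i : Fin r) (hi : (i : ℕ) + 1 < r), f ⟨(i : ℕ) + 1, hi⟩ ≤ f i) : Antitone f := by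
  cases r with
  | zero => exact fun i => i.elim0
  | succ n => exact Fin.antitone_iff_succ_le.mpr fun i => h i.castSucc (by simp)

theorem blockStart_eq_sum_castLE {r : ℕ} (M : Fin r → ℕ) (i : Fin r) :
    blockStart M i = ∑ k : Fin i, M (Fin.castLE i.2.le k) := by
  have hIio : Finset.Iio i = Finset.univ.map (Fin.castLEEmb i.2.le) := by
    ext t
    simp only [Finset.mem_Iio, Finset.mem_map, Finset.mem_univ, true_and, Fin.castLEEmb_apply]
    exact ⟨fun h => ⟨⟨t, h⟩, rfl⟩, by rintro ⟨k, rfl⟩; exact k.2⟩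
  rw [blockStart, hIio, Finset.sum_map]
  rfl

theorem finSigmaFinEquiv_eq_blockIdx {r : ℕ} (M : Fin r → ℕ) (i : Fin r) (a : Fin (M i)) :
    finSigmaFinEquiv ⟨i, a⟩ = blockIdx M i a :=
  Fin.ext <| by
    rw [finSigmaFinEquiv_apply, show (blockIdx M i a : ℕ) = blockStart M i + a from rfl,
      blockStart_eq_sum_castLE]

theorem sum_eq_sum_blockIdx {β : Type*} [AddCommMonoid β] {r : ℕ} (M : Fin r → ℕ)
    (f : Fin (∑ t, M t) → β) :
    ∑ p, f p = ∑ i : Fin r, ∑ a : Fin (M i), f (blockIdx M i a) := by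
  rw [← Fintype.sum_equiv finSigmaFinEquiv (fun p => f (finSigmaFinEquiv p)) f (fun _ => rfl),
    Fintype.sum_sigma]
  simp only [finSigmaFinEquiv_eq_blockIdx]

section RowSpace

variable {D : Type*} [DivisionRing D] {ι κ : Type*} {n : ℕ}

theorem exists_mul_eq_iff_forall_mem_LRS [Fintype κ] (A : Matrix ι (Fin n) D)
    (B : Matrix κ (Fin n) D) : (∃ X : Matrix ι κ D, A = X * B) ↔ ∀ a, A a ∈ LRS B := by
  constructor
  · rintro ⟨X, rfl⟩ a
    rw [mul_apply_eq_vecMul, vecMul_eq_sum]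
    exact Submodule.sum_mem _ fun k _ => Submodule.smul_mem _ _ (Submodule.subset_span ⟨k, rfl⟩)
  · intro h
    choose X hX using fun a => (Submodule.mem_span_range_iff_exists_fun D).mp (h a)
    refine ⟨Matrix.of X, funext fun a => ?_⟩
    rw [mul_apply_eq_vecMul, vecMul_eq_sum, ← hX]
    rfl

theorem apply_eq_zero_of_mem_LRS {A : Matrix ι (Fin n) D} {c : Fin n} (hA : ∀ p, A p c = 0)
    {v : Fin n → D} (hv : v ∈ LRS A) : v c = 0 :=
  (Submodule.span_le (p := LinearMap.ker (LinearMap.proj c)) |>.mpr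
    (Set.range_subset_iff.mpr hA)) hv

end RowSpace

section BlockRowSubmodule

variable {D : Type*} [DivisionRing D] {r n : ℕ}

def blockRowSubmodule (M : Fin r → ℕ) (V : Fin r → Submodule D (Fin n → D)) :
    Submodule D (Matrix (Fin (∑ t, M t)) (Fin n) D) where
  carrier := {A | ∀ i a, A (blockIdx M i a) ∈ V i}
  add_mem' hA hB i a := (V i).add_mem (hA i a) (hB i a)
  zero_mem' i _ := (V i).zero_mem
  smul_mem' c _ hA i a := (V i).smul_mem c (hA i a)

theorem mem_blockRowSubmodule {M : Fin r → ℕ} {V : Fin r → Submodule D (Fin n → D)}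
    {A : Matrix (Fin (∑ t, M t)) (Fin n) D} :
    A ∈ blockRowSubmodule M V ↔ ∀ i a, A (blockIdx M i a) ∈ V i :=
  Iff.rfl

theorem mul_mem_blockRowSubmodule {M : Fin r → ℕ} {V : Fin r → Submodule D (Fin n → D)}
    (hV : Antitone V) {P : Matrix (Fin (∑ t, M t)) (Fin (∑ t, M t)) D} (hP : IsNest M M P)
    {A : Matrix (Fin (∑ t, M t)) (Fin n) D} (hA : A ∈ blockRowSubmodule M V) :
    P * A ∈ blockRowSubmodule M V := by
  intro i a
  rw [mul_apply_eq_vecMul, vecMul_eq_sum, sum_eq_sum_blockIdx M]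
  refine Submodule.sum_mem _ fun j _ => Submodule.sum_mem _ fun b _ => ?_
  rcases lt_or_ge j i with hji | hij
  · rw [hP i j a b hji, zero_smul]
    exact (V i).zero_mem
  · exact (V i).smul_mem _ (hV hij (hA j b))

theorem isNest_of_mem_blockRowSubmodule {s : ℕ} {M : Fin r → ℕ} {N : Fin s → ℕ}
    {V : Fin r → Submodule D (Fin (∑ t, N t) → D)}
    (hV : ∀ (i : Fin r) (j : Fin s), (j : ℕ) < (i : ℕ) → ∀ b, ∀ v ∈ V i, v (blockIdx N j b) = 0)
    {A : Matrix (Fin (∑ t, M t)) (Fin (∑ t, N t)) D} (hA : A ∈ blockRowSubmodule M V) :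
    IsNest M N A :=
  fun i j a b hji => hV i j hji b _ (hA i a)

end BlockRowSubmodule

theorem echelon_seq_determines_leftSubmodule_general
    (D : Type*) [DivisionRing D] (r s : ℕ) (M : Fin r → ℕ) (N : Fin s → ℕ)
    (R : Fin r → Matrix (Fin (∑ t, N t)) (Fin (∑ t, N t)) D)
    (hdesc : ∀ (i : Fin r) (hi : (i : ℕ) + 1 < r), LRS (R ⟨(i : ℕ) + 1, hi⟩) ≤ LRS (R i))
    (hblk : ∀ (i : Fin r) (j : Fin s), (j : ℕ) < (i : ℕ) →
      ∀ (p : Fin (∑ t, N t)) (b : Fin (N j)), R i p (blockIdx N j b) = 0)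
    (J : Set (Matrix (Fin (∑ t, M t)) (Fin (∑ t, N t)) D))
    (hJdef : J = {A | ∀ i : Fin r, ∃ X : Matrix (Fin (M i)) (Fin (∑ t, N t)) D,
      blockRow M A i = X * R i}) :
    (∀ A ∈ J, IsNest M N A) ∧
    (0 : Matrix (Fin (∑ t, M t)) (Fin (∑ t, N t)) D) ∈ J ∧
    (∀ A ∈ J, ∀ B ∈ J, A + B ∈ J) ∧
    (∀ A ∈ J, -A ∈ J) ∧
    (∀ (P : Matrix (Fin (∑ t, M t)) (Fin (∑ t, M t)) D),
      IsNest M M P → ∀ A ∈ J, P * A ∈ J) := by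
  set V := blockRowSubmodule M fun i => LRS (R i)
  have hJ : J = V := by
    ext A
    simp only [hJdef, Set.mem_ofPred_eq, SetLike.mem_coe, V, mem_blockRowSubmodule,
      exists_mul_eq_iff_forall_mem_LRS]
    rfl
  subst hJ
  exact ⟨fun _ hA => isNest_of_mem_blockRowSubmodule
      (fun i j hji b _ hv => apply_eq_zero_of_mem_LRS (hblk i j hji · b) hv) hA,
    V.zero_mem, fun _ hA _ hB => V.add_mem hA hB, fun _ hA => V.neg_mem hA,
    fun _ hP _ hA => mul_mem_blockRowSubmodule (Fin.antitone_of_succ_le hdesc) hP hA⟩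

/-- Conversely, any sequence `(R_1, …, R_r)` of matrices in `M_n(D)`
with decreasing row spaces and `j`-th block columns zero for `j < i` determines the set
`J = {A : Row_i(A) ∈ M_{m_i×n}(D)·R_i for all i}`, which is contained in `T_{(M,N)}(D)`
and is a left submodule of it. -/
theorem echelon_seq_determines_leftSubmodule
    (D : Type*) [DivisionRing D] (r s : ℕ) (M : Fin r → ℕ) (N : Fin s → ℕ)
    (hM : ∀ i, 0 < M i) (hN : ∀ j, 0 < N j)
    (R : Fin r → Matrix (Fin (∑ t, N t)) (Fin (∑ t, N t)) D)
    (hdesc : ∀ (i : Fin r) (hi : (i : ℕ) + 1 < r), LRS (R ⟨(i : ℕ) + 1, hi⟩) ≤ LRS (R i))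
    (hblk : ∀ (i : Fin r) (j : Fin s), (j : ℕ) < (i : ℕ) →
      ∀ (p : Fin (∑ t, N t)) (b : Fin (N j)), R i p (blockIdx N j b) = 0)
    (J : Set (Matrix (Fin (∑ t, M t)) (Fin (∑ t, N t)) D))
    (hJdef : J = {A | ∀ i : Fin r, ∃ X : Matrix (Fin (M i)) (Fin (∑ t, N t)) D,
      blockRow M A i = X * R i}) :
    (∀ A ∈ J, IsNest M N A) ∧
    (0 : Matrix (Fin (∑ t, M t)) (Fin (∑ t, N t)) D) ∈ J ∧
    (∀ A ∈ J, ∀ B ∈ J, A + B ∈ J) ∧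
    (∀ A ∈ J, -A ∈ J) ∧
    (∀ (P : Matrix (Fin (∑ t, M t)) (Fin (∑ t, M t)) D),
      IsNest M M P → ∀ A ∈ J, P * A ∈ J) :=
  echelon_seq_determines_leftSubmodule_general D r s M N R hdesc hblk J hJdef
end

section
/- Let D be a division ring, m, n positive integers, I a left submodule of M_{m×n}(D), R ∈ M_n(D) the unique left row reduced echelon matrix with I = M_{m×n}(D)·R, and A ∈ M_{m×n}(D). Then I = M_m(D)·A := {P·A : P ∈ M_m(D)} if and only if LRS(R) = LRS(A). -/
/-! A matrix lies in `M_m(D)·A` exactly when each of its rows lies in `LRS A` (row `i` of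
`P·A` is `P i ᵥ* A`), so `M_m(D)·A` is the product set `LRS(A)^m`, and likewise for `R`.
Since `m > 0`, a product set `S^m` determines `S` through its constant matrices. -/

open Matrix Pointwise

theorem Set.univ_pi_const_inj {ι α : Type*} [Nonempty ι] {s t : Set α} :
    Set.univ.pi (fun _ : ι => s) = Set.univ.pi (fun _ => t) ↔ s = t := by
  refine ⟨fun h => Set.ext fun v => ?_, fun h => h ▸ rfl⟩
  simpa using Set.ext_iff.mp h (fun _ => v)

theorem LRS_eq_range_vecMul {D κ : Type*} [DivisionRing D] [Fintype κ] {n : ℕ}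
    (A : Matrix κ (Fin n) D) : (LRS A : Set (Fin n → D)) = Set.range (· ᵥ* A) :=
  congrArg SetLike.coe (range_vecMulLinear A).symm

theorem range_mul_eq_univ_pi_LRS {D ι κ : Type*} [DivisionRing D] [Fintype κ] {n : ℕ}
    (A : Matrix κ (Fin n) D) :
    Set.range (fun P : Matrix ι κ D => P * A) = Set.univ.pi (fun _ => (LRS A : Set _)) := by
  rw [LRS_eq_range_vecMul, ← Set.range_piMap]
  rfl

theorem leftSubmodule_eq_principal_iff_lrs_eq_general
    (D : Type*) [DivisionRing D] (m n : ℕ) (hm : 0 < m)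
    (I : AddSubgroup (Matrix (Fin m) (Fin n) D))
    (R : Matrix (Fin n) (Fin n) D)
    (hIR : (I : Set (Matrix (Fin m) (Fin n) D)) =
      Set.range (fun X : Matrix (Fin m) (Fin n) D => X * R))
    (A : Matrix (Fin m) (Fin n) D) :
    (I : Set (Matrix (Fin m) (Fin n) D)) =
        Set.range (fun P : Matrix (Fin m) (Fin m) D => P * A) ↔
      LRS R = LRS A := by
  have : Nonempty (Fin m) := ⟨⟨0, hm⟩⟩
  rw [hIR, range_mul_eq_univ_pi_LRS, range_mul_eq_univ_pi_LRS]
  exact Set.univ_pi_const_inj.trans SetLike.coe_set_eq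

/-- If `I = M_{m×n}(D)·R` is a left submodule with `R` its unique left
row reduced echelon matrix, and `A ∈ M_{m×n}(D)`, then `I = M_m(D)·A` iff
`LRS(R) = LRS(A)`. -/
theorem leftSubmodule_eq_principal_iff_lrs_eq
    (D : Type*) [DivisionRing D] (m n : ℕ) (hm : 0 < m) (hn : 0 < n)
    (I : AddSubgroup (Matrix (Fin m) (Fin n) D))
    (hI : ∀ (P : Matrix (Fin m) (Fin m) D) (B : Matrix (Fin m) (Fin n) D),
      B ∈ I → P * B ∈ I)
    (R : Matrix (Fin n) (Fin n) D) (hR : IsRowReducedEchelon R)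
    (hIR : (I : Set (Matrix (Fin m) (Fin n) D)) =
      Set.range (fun X : Matrix (Fin m) (Fin n) D => X * R))
    (A : Matrix (Fin m) (Fin n) D) :
    (I : Set (Matrix (Fin m) (Fin n) D)) =
        Set.range (fun P : Matrix (Fin m) (Fin m) D => P * A) ↔
      LRS R = LRS A :=
  leftSubmodule_eq_principal_iff_lrs_eq_general D m n hm I R hIR A
end

section
/- Let D be a division ring, m, n positive integers, T_{m×n}(D) the set of upper triangular m×n matrices over D, and T_m(D) the ring of upper triangular m×m matrices over D. Let J be a left submodule of T_{m×n}(D) (an additive subgroup with T_m(D)·J ⊆ J) and A ∈ T_{m×n}(D). Then J = T_m(D)·A := {P·A : P ∈ T_m(D)} if and only if for each 1 ≤ i ≤ m, the set row_i(J) := {row_i(X) : X ∈ J} equals the left D-span of {row_k(A) : i ≤ k ≤ m} in M_{1×n}(D). -/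
open Matrix Pointwise

/-!
Both sides are statements about rows. A matrix `B` equals `P * A` with `P` upper triangular
exactly when each row `B i` is a combination of the rows `A k`, `k ≥ i` (the coefficients being
row `i` of `P`); in particular the `i`-th rows of `T_m(D)·A` fill out that span. On the other
hand a left `T_m(D)`-submodule `J` contains every `B` whose rows are rows of members of `J`,
since `B = ∑ i, E_ii * X_i` for any `X_i ∈ J` with `X_i i = B i`. So `J` and `T_m(D)·A` are
both determined by their row sets, and they coincide iff the row sets do.
-/

open Matrix Set Submodule

section

variable {R : Type*} [Semiring R]

theorem Submodule.mem_span_image_iff_exists_sum_smul {ι M : Type*} [Fintype ι] [AddCommMonoid M]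
    [Module R M] (v : ι → M) (s : Set ι) (x : M) :
    x ∈ span R (v '' s) ↔ ∃ c : ι → R, (∀ i ∉ s, c i = 0) ∧ ∑ i, c i • v i = x := by
  constructor
  · intro hx
    obtain ⟨l, hl, rfl⟩ := (Finsupp.mem_span_image_iff_linearCombination R).mp hx
    refine ⟨l, fun i hi => Finsupp.notMem_support_iff.mp fun h => hi (hl h), ?_⟩
    exact (Finsupp.sum_fintype l (fun i a => a • v i) fun i => zero_smul R (v i)).symm
  · rintro ⟨c, hc, rfl⟩
    refine sum_mem fun i _ => ?_
    by_cases hi : i ∈ s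
    · exact smul_mem _ _ (subset_span (mem_image_of_mem v hi))
    · simp [hc i hi]

variable {m n : ℕ}

theorem exists_upperTriangular_mul_eq_iff (A B : Matrix (Fin m) (Fin n) R) :
    (∃ P : Matrix (Fin m) (Fin m) R, _root_.IsUpperTriangular P ∧ B = P * A) ↔
      ∀ i, B i ∈ span R (A '' Ici i) := by
  constructor
  · rintro ⟨P, hP, rfl⟩ i
    exact (mem_span_image_iff_exists_sum_smul A _ _).mpr
      ⟨P i, fun q hq => hP i q (not_le.mp hq), (vecMul_eq_sum _ _).symm⟩
  · intro h
    choose c hc hcA using fun i => (mem_span_image_iff_exists_sum_smul A _ (B i)).mp (h i)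
    exact ⟨of c, fun i q hq => hc i q (not_le.mpr hq),
      funext fun i => ((vecMul_eq_sum _ _).trans (hcA i)).symm⟩

theorem eval_image_upperTriangular_mul (A : Matrix (Fin m) (Fin n) R) (i : Fin m) :
    Function.eval i ''
        {B | ∃ P : Matrix (Fin m) (Fin m) R, _root_.IsUpperTriangular P ∧ B = P * A} =
      span R (A '' Ici i) := by
  ext v
  constructor
  · rintro ⟨B, hB, rfl⟩
    exact (exists_upperTriangular_mul_eq_iff A B).mp hB i
  intro hv
  refine ⟨updateRow 0 i v, (exists_upperTriangular_mul_eq_iff A _).mpr fun p => ?_, by simp⟩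
  by_cases hp : p = i
  · rw [hp, updateRow_self]
    exact hv
  · rw [updateRow_ne hp]
    exact zero_mem _

theorem AddSubmonoid.mem_of_forall_exists_row_eq (J : AddSubmonoid (Matrix (Fin m) (Fin n) R))
    (hJ : ∀ (P : Matrix (Fin m) (Fin m) R) (B : Matrix (Fin m) (Fin n) R),
      _root_.IsUpperTriangular P → B ∈ J → P * B ∈ J)
    {B : Matrix (Fin m) (Fin n) R} (hB : ∀ i, ∃ X ∈ J, X i = B i) : B ∈ J := by
  choose X hXJ hXB using hB
  have hsum : B = ∑ i, Matrix.single i i (1 : R) * X i := by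
    ext p q
    simp [single_mul_eq_updateRow_zero, Matrix.sum_apply, updateRow_apply, ← hXB]
  rw [hsum]
  refine J.sum_mem fun i _ => hJ _ _ (fun p q hqp => ?_) (hXJ i)
  exact single_apply_of_ne _ _ _ _ _ fun ⟨hp, hq⟩ => hqp.ne (by rw [← hp, ← hq])

end

theorem leftSubmodule_upperTriangular_eq_principal_iff_general
    (D : Type*) [DivisionRing D] (m n : ℕ)
    (J : AddSubgroup (Matrix (Fin m) (Fin n) D))
    (hJ : ∀ (P : Matrix (Fin m) (Fin m) D) (B : Matrix (Fin m) (Fin n) D),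
      _root_.IsUpperTriangular P → B ∈ J → P * B ∈ J)
    (A : Matrix (Fin m) (Fin n) D) :
    (J : Set (Matrix (Fin m) (Fin n) D)) =
        {B | ∃ P : Matrix (Fin m) (Fin m) D, _root_.IsUpperTriangular P ∧ B = P * A} ↔
      ∀ i : Fin m, {v : Fin n → D | ∃ X ∈ J, X i = v} =
        ↑(Submodule.span D {v : Fin n → D | ∃ k : Fin m, i ≤ k ∧ v = A k}) := by
  have hrows : ∀ i : Fin m, {v : Fin n → D | ∃ k : Fin m, i ≤ k ∧ v = A k} = A '' Ici i :=
    fun i => Set.ext fun v =>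
      ⟨fun ⟨k, hk, hv⟩ => ⟨k, hk, hv.symm⟩, fun ⟨k, hk, hv⟩ => ⟨k, hk, hv.symm⟩⟩
  simp only [hrows]
  constructor
  · intro hJS i
    exact (congrArg (Function.eval i '' ·) hJS).trans (eval_image_upperTriangular_mul A i)
  · intro h
    ext B
    rw [SetLike.mem_coe, mem_ofPred_eq, exists_upperTriangular_mul_eq_iff]
    simp only [← SetLike.mem_coe, ← h]
    exact ⟨fun hB i => ⟨B, hB, rfl⟩, J.toAddSubmonoid.mem_of_forall_exists_row_eq hJ⟩

/-- Let `J` be a left submodule of the upper triangular matrices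
`T_{m×n}(D)` and `A ∈ T_{m×n}(D)`. Then `J = T_m(D)·A` iff for every `i`, the set
`row_i(J)` equals the left `D`-span of the rows `row_k(A)` with `k ≥ i`. -/
theorem leftSubmodule_upperTriangular_eq_principal_iff
    (D : Type*) [DivisionRing D] (m n : ℕ) (hm : 0 < m) (hn : 0 < n)
    (J : AddSubgroup (Matrix (Fin m) (Fin n) D))
    (hJT : ∀ A ∈ J, IsUpperTriangular A)
    (hJ : ∀ (P : Matrix (Fin m) (Fin m) D) (B : Matrix (Fin m) (Fin n) D),
      _root_.IsUpperTriangular P → B ∈ J → P * B ∈ J)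
    (A : Matrix (Fin m) (Fin n) D) (hA : IsUpperTriangular A) :
    (J : Set (Matrix (Fin m) (Fin n) D)) =
        {B | ∃ P : Matrix (Fin m) (Fin m) D, _root_.IsUpperTriangular P ∧ B = P * A} ↔
      ∀ i : Fin m, {v : Fin n → D | ∃ X ∈ J, X i = v} =
        ↑(Submodule.span D {v : Fin n → D | ∃ k : Fin m, i ≤ k ∧ v = A k}) :=
  leftSubmodule_upperTriangular_eq_principal_iff_general D m n J hJ A
end

section
/- Let D be a division ring, M = (m_1,…,m_r), N = (n_1,…,n_s) partitions of m and n, and J a nonzero right submodule of T_{(M,N)}(D) with associated unique sequence (C_1,…,C_s) of right column reduced echelon matrices. Let 1 ≤ k ≤ s be the smallest index with C_k ≠ 0, and set C_{k−1} := 0 if k = 1. Then J is principal as a right submodule (i.e., J = A·T_N := {A·Q : Q ∈ T_N} for some A ∈ T_{(M,N)}(D)) if and only if rank(C_j) − rank(C_{j−1}) ≤ n_j for every k ≤ j ≤ s. -/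
/-!
Write `V_j(A)` for the right column space of the block columns `1, …, j` of `A`. A column of
`A·Q` with `Q ∈ T_N` in block `j` is a right combination of the columns of `A` in blocks `≤ j`,
and every such family of combinations arises, so `A·T_N` is the set of matrices whose `j`-th
block column has its columns in `V_j(A)`; by definition, `J` is the set of matrices whose `j`-th
block column has its columns in `RCS(C_j)`. As no block is empty, `J = A·T_N` amounts to
`V_j(A) = RCS(C_j)` for all `j`. An ascending chain `W_1 ≤ ⋯ ≤ W_s` is of the form `V_j(A)`
exactly when `dim W_j − dim W_{j−1} ≤ n_j`: the `n_j` columns of block `j` must, and can, span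
`W_j` modulo `W_{j−1}`. Such an `A` lies in `T_{(M,N)}` automatically, since block row `i` of
`C_j` vanishes for `i > j`.
-/

open Matrix Pointwise

open Module Submodule

instance {D : Type*} [DivisionRing D] : Module.Finite Dᵐᵒᵖ D :=
  Module.Finite.equiv (MulOpposite.opLinearEquiv Dᵐᵒᵖ).symm

section Blocks

variable {s : ℕ} (N : Fin s → ℕ)

theorem blockIdx_eq_finSigmaFinEquiv (j : Fin s) (b : Fin (N j)) :
    blockIdx N j b = finSigmaFinEquiv ⟨j, b⟩ := by
  have hstart : blockStart N j = ∑ i : Fin j, N (Fin.castLE j.2.le i) := by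
    rw [blockStart]
    refine Eq.trans ?_ (Finset.sum_map Finset.univ (Fin.castLEEmb j.2.le) N)
    congr 1
    ext t
    simpa using ⟨fun h => ⟨⟨t, h⟩, rfl⟩, by rintro ⟨a, rfl⟩; exact a.2⟩
  apply Fin.ext
  simp [blockIdx, hstart]

def blockOf (q : Fin (∑ t, N t)) : Fin s :=
  (finSigmaFinEquiv.symm q).1

@[simp]
theorem blockOf_blockIdx (j : Fin s) (b : Fin (N j)) : blockOf N (blockIdx N j b) = j := by
  simp [blockOf, blockIdx_eq_finSigmaFinEquiv]

theorem exists_blockIdx_eq (q : Fin (∑ t, N t)) : ∃ j b, blockIdx N j b = q :=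
  ⟨_, _, (blockIdx_eq_finSigmaFinEquiv N _ _).trans (finSigmaFinEquiv.apply_symm_apply q)⟩

theorem isNest_iff {D : Type*} [Zero D] {r : ℕ} (M : Fin r → ℕ)
    (A : Matrix (Fin (∑ t, M t)) (Fin (∑ t, N t)) D) :
    IsNest M N A ↔ ∀ p q, (blockOf N q : ℕ) < blockOf M p → A p q = 0 := by
  refine ⟨fun h p q hqp => ?_, fun h i j a b hji => h _ _ (by simpa using hji)⟩
  obtain ⟨i, a, rfl⟩ := exists_blockIdx_eq M p
  obtain ⟨j, b, rfl⟩ := exists_blockIdx_eq N q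
  exact h i j a b (by simpa using hqp)

@[simp]
theorem transpose_blockCol_apply {D : Type*} {m : ℕ} (A : Matrix (Fin m) (Fin (∑ t, N t)) D)
    (j : Fin s) (b : Fin (N j)) : (blockCol N A j)ᵀ b = Aᵀ (blockIdx N j b) :=
  rfl

end Blocks

section ColumnSpaces

variable {D : Type*} [DivisionRing D] {m : ℕ} {ι κ : Type*}

theorem transpose_mul_eq_sum_smul [Fintype ι] (C : Matrix (Fin m) ι D) (Y : Matrix ι κ D) (q : κ) :
    (C * Y)ᵀ q = ∑ p, MulOpposite.op (Y p q) • Cᵀ p := by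
  ext i
  simp [Matrix.mul_apply, Finset.sum_apply]

theorem exists_mul_eq_iff [Fintype ι] (C : Matrix (Fin m) ι D) (X : Matrix (Fin m) κ D) :
    (∃ Y : Matrix ι κ D, X = C * Y) ↔ ∀ q, Xᵀ q ∈ RCS C := by
  refine ⟨fun ⟨Y, hY⟩ q => ?_, fun h => ?_⟩
  · rw [hY, transpose_mul_eq_sum_smul]
    exact sum_mem fun p _ => smul_mem _ _ (subset_span (Set.mem_range_self p))
  · choose c hc using fun q => (mem_span_range_iff_exists_fun Dᵐᵒᵖ).1 (h q)
    refine ⟨Matrix.of fun p q => (c q p).unop, ?_⟩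
    ext i q
    simpa [Matrix.mul_apply, Finset.sum_apply] using (congrFun (hc q) i).symm

@[simp]
theorem RCS_zero : RCS (0 : Matrix (Fin m) ι D) = ⊥ :=
  span_eq_bot.2 <| by rintro _ ⟨p, rfl⟩; rfl

theorem apply_eq_zero_of_mem_RCS {C : Matrix (Fin m) ι D} {i : Fin m} (h : ∀ p, C i p = 0)
    {x : Fin m → D} (hx : x ∈ RCS C) : x i = 0 := by
  have hle : RCS C ≤ LinearMap.ker (LinearMap.proj (R := Dᵐᵒᵖ) (φ := fun _ : Fin m => D) i) :=
    span_le.2 <| by rintro _ ⟨p, rfl⟩; simp [h p]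
  simpa using hle hx

theorem finrank_RCS_le [Fintype ι] (C : Matrix (Fin m) ι D) :
    finrank Dᵐᵒᵖ (RCS C) ≤ Fintype.card ι :=
  finrank_range_le_card _

end ColumnSpaces

section Extension

variable {K V : Type*} [DivisionRing K] [AddCommGroup V] [Module K V]

theorem exists_span_range_eq_of_finrank_le {P : Submodule K V} [FiniteDimensional K P] {n : ℕ}
    (h : finrank K P ≤ n) : ∃ v : Fin n → V, span K (Set.range v) = P := by
  let b := Module.finBasis K P
  refine ⟨fun i => if hi : (i : ℕ) < finrank K P then b ⟨i, hi⟩ else 0, le_antisymm ?_ ?_⟩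
  · rw [span_le]
    rintro _ ⟨i, rfl⟩
    dsimp only
    split_ifs <;> simp
  · have hb := congrArg (map P.subtype) b.span_eq
    rw [map_span, ← Set.range_comp, map_subtype_top] at hb
    refine hb.ge.trans (span_mono ?_)
    rintro _ ⟨i, rfl⟩
    exact ⟨Fin.castLE h i, by simp⟩

theorem exists_sup_span_range_eq [FiniteDimensional K V] {U W : Submodule K V} (hUW : U ≤ W)
    {n : ℕ} (h : finrank K W ≤ finrank K U + n) :
    ∃ v : Fin n → V, U ⊔ span K (Set.range v) = W := by
  obtain ⟨C, hC⟩ := U.exists_isCompl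
  have hsup : U ⊔ C ⊓ W = W := by
    rw [← sup_inf_assoc_of_le C hUW, hC.sup_eq_top, top_inf_eq]
  have hinf : U ⊓ (C ⊓ W) = ⊥ :=
    eq_bot_iff.2 <| (inf_le_inf_left U inf_le_left).trans hC.inf_eq_bot.le
  have hrank := Submodule.finrank_sup_add_finrank_inf_eq U (C ⊓ W)
  rw [hsup, hinf, finrank_bot] at hrank
  obtain ⟨v, hv⟩ := exists_span_range_eq_of_finrank_le (P := C ⊓ W) (n := n) (by omega)
  exact ⟨v, hv ▸ hsup⟩

end Extension

theorem monotone_fin_of_le_succ {α : Type*} [Preorder α] {s : ℕ} {f : Fin s → α}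
    (h : ∀ (j : Fin s) (hj : (j : ℕ) + 1 < s), f j ≤ f ⟨j + 1, hj⟩) : Monotone f := by
  cases s with
  | zero => exact fun i => i.elim0
  | succ s => exact Fin.monotone_iff_le_succ.2 fun i => h i.castSucc (by simp)

theorem Monotone.iSup_lt_eq_dite {α : Type*} [CompleteLattice α] {s : ℕ} {f : Fin s → α}
    (hf : Monotone f) (j : Fin s) :
    ⨆ i < j, f i = if h : 0 < (j : ℕ) then f ⟨j - 1, by omega⟩ else ⊥ := by
  split_ifs with h
  · refine le_antisymm (iSup₂_le fun i hi => hf ?_) (le_iSup₂_of_le _ ?_ le_rfl)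
    · exact Fin.le_def.2 (by have := Fin.lt_def.1 hi; dsimp only; omega)
    · exact Fin.lt_def.2 (by dsimp only; omega)
  · exact iSup₂_eq_bot.2 fun i hi => absurd (Fin.lt_def.1 hi) (by omega)

section CumulativeColumnSpaces

variable {D : Type*} [DivisionRing D] {m s : ℕ} {N : Fin s → ℕ}

variable (N) in
def cumColSpace (A : Matrix (Fin m) (Fin (∑ t, N t)) D) (j : Fin s) :
    Submodule Dᵐᵒᵖ (Fin m → D) :=
  span Dᵐᵒᵖ (Aᵀ '' {q | blockOf N q ≤ j})

theorem cumColSpace_mono (A : Matrix (Fin m) (Fin (∑ t, N t)) D) : Monotone (cumColSpace N A) :=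
  fun _ _ hij => span_mono (Set.image_mono fun _ hq => le_trans hq hij)

theorem transpose_mem_cumColSpace (A : Matrix (Fin m) (Fin (∑ t, N t)) D) {q : Fin (∑ t, N t)}
    {j : Fin s} (h : blockOf N q ≤ j) : Aᵀ q ∈ cumColSpace N A j :=
  subset_span ⟨q, h, rfl⟩

theorem cumColSpace_le_iSup_lt_sup (A : Matrix (Fin m) (Fin (∑ t, N t)) D) (j : Fin s) :
    cumColSpace N A j ≤ (⨆ i < j, cumColSpace N A i) ⊔ RCS (blockCol N A j) := by
  refine span_le.2 ?_
  rintro _ ⟨q, hq, rfl⟩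
  obtain ⟨i, b, rfl⟩ := exists_blockIdx_eq N q
  simp only [Set.mem_ofPred_eq, blockOf_blockIdx] at hq
  rcases hq.lt_or_eq with hij | rfl
  · exact mem_sup_left <| le_iSup₂ (f := fun i (_ : i < j) => cumColSpace N A i) i hij
      (transpose_mem_cumColSpace A (blockOf_blockIdx N i b).le)
  · exact mem_sup_right (subset_span ⟨b, rfl⟩)

theorem finrank_cumColSpace_le (A : Matrix (Fin m) (Fin (∑ t, N t)) D) (j : Fin s) :
    finrank Dᵐᵒᵖ (cumColSpace N A j) ≤ finrank Dᵐᵒᵖ ↥(⨆ i < j, cumColSpace N A i) + N j :=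
  calc finrank Dᵐᵒᵖ (cumColSpace N A j)
      ≤ finrank Dᵐᵒᵖ ↥((⨆ i < j, cumColSpace N A i) ⊔ RCS (blockCol N A j)) :=
        finrank_mono (cumColSpace_le_iSup_lt_sup A j)
    _ ≤ finrank Dᵐᵒᵖ ↥(⨆ i < j, cumColSpace N A i) + finrank Dᵐᵒᵖ (RCS (blockCol N A j)) :=
        finrank_add_le_finrank_add_finrank _ _
    _ ≤ _ := by simpa using finrank_RCS_le (blockCol N A j)

theorem exists_cumColSpace_eq {W : Fin s → Submodule Dᵐᵒᵖ (Fin m → D)} (hW : Monotone W)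
    (hrank : ∀ j, finrank Dᵐᵒᵖ (W j) ≤ finrank Dᵐᵒᵖ ↥(⨆ i < j, W i) + N j) :
    ∃ A : Matrix (Fin m) (Fin (∑ t, N t)) D, cumColSpace N A = W := by
  choose v hv using fun j => exists_sup_span_range_eq (iSup₂_le fun i hi => hW hi.le) (hrank j)
  let col : (Σ j, Fin (N j)) → Fin m → D := fun x => v x.1 x.2
  let A : Matrix (Fin m) (Fin (∑ t, N t)) D := Matrix.of fun p q => col (finSigmaFinEquiv.symm q) p
  have hA : ∀ j b, Aᵀ (blockIdx N j b) = v j b := fun j b => by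
    change col (finSigmaFinEquiv.symm (blockIdx N j b)) = v j b
    rw [blockIdx_eq_finSigmaFinEquiv, Equiv.symm_apply_apply]
  have hvW : ∀ j b, v j b ∈ W j := fun j b => by
    rw [← hv j]
    exact mem_sup_right (subset_span ⟨b, rfl⟩)
  refine ⟨A, funext fun j => le_antisymm (span_le.2 ?_) ?_⟩
  · rintro _ ⟨q, hq, rfl⟩
    obtain ⟨i, b, rfl⟩ := exists_blockIdx_eq N q
    simp only [Set.mem_ofPred_eq, blockOf_blockIdx] at hq
    exact hA i b ▸ hW hq (hvW i b)
  · induction j using WellFoundedLT.induction with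
    | _ j ih =>
      rw [← hv j]
      refine sup_le (iSup₂_le fun i hi => (ih i hi).trans (cumColSpace_mono A hi.le))
        (span_le.2 ?_)
      rintro _ ⟨b, rfl⟩
      exact hA j b ▸ transpose_mem_cumColSpace A (blockOf_blockIdx N j b).le

theorem exists_cumColSpace_eq_iff {W : Fin s → Submodule Dᵐᵒᵖ (Fin m → D)} :
    (∃ A : Matrix (Fin m) (Fin (∑ t, N t)) D, cumColSpace N A = W) ↔
      Monotone W ∧ ∀ j, finrank Dᵐᵒᵖ (W j) ≤ finrank Dᵐᵒᵖ ↥(⨆ i < j, W i) + N j := by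
  refine ⟨?_, fun h => exists_cumColSpace_eq h.1 h.2⟩
  rintro ⟨A, rfl⟩
  exact ⟨cumColSpace_mono A, finrank_cumColSpace_le A⟩

end CumulativeColumnSpaces

section BlockColumnConditions

variable {D : Type*} [DivisionRing D] {m s : ℕ} {N : Fin s → ℕ}

variable (N) in
def blockColsIn (W : Fin s → Submodule Dᵐᵒᵖ (Fin m → D)) :
    Set (Matrix (Fin m) (Fin (∑ t, N t)) D) :=
  {B | ∀ q, Bᵀ q ∈ W (blockOf N q)}

theorem setOf_blockCol_eq_mul_eq_blockColsIn {ι : Type*} [Fintype ι]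
    (C : Fin s → Matrix (Fin m) ι D) :
    {B : Matrix (Fin m) (Fin (∑ t, N t)) D |
      ∀ j, ∃ Y : Matrix ι (Fin (N j)) D, blockCol N B j = C j * Y} =
      blockColsIn N fun j => RCS (C j) := by
  ext B
  simp only [Set.mem_ofPred_eq, blockColsIn, exists_mul_eq_iff]
  refine ⟨fun h q => ?_, fun h j b => by simpa using h (blockIdx N j b)⟩
  obtain ⟨j, b, rfl⟩ := exists_blockIdx_eq N q
  simpa using h j b

theorem transpose_mem_blockColsIn_cumColSpace (A : Matrix (Fin m) (Fin (∑ t, N t)) D) :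
    A ∈ blockColsIn N (cumColSpace N A) :=
  fun _ => transpose_mem_cumColSpace A le_rfl

theorem setOf_mul_isNest_eq_blockColsIn (A : Matrix (Fin m) (Fin (∑ t, N t)) D) :
    {B : Matrix (Fin m) (Fin (∑ t, N t)) D |
      ∃ Q : Matrix (Fin (∑ t, N t)) (Fin (∑ t, N t)) D, IsNest N N Q ∧ B = A * Q} =
      blockColsIn N (cumColSpace N A) := by
  ext B
  simp only [Set.mem_ofPred_eq, blockColsIn, isNest_iff]
  constructor
  · rintro ⟨Q, hQ, rfl⟩ q
    rw [transpose_mul_eq_sum_smul]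
    refine sum_mem fun p _ => ?_
    by_cases hp : blockOf N p ≤ blockOf N q
    · exact smul_mem _ _ (transpose_mem_cumColSpace A hp)
    · rw [hQ p q (Fin.lt_def.1 (not_le.1 hp)), MulOpposite.op_zero, zero_smul]
      exact zero_mem _
  · intro hB
    choose l hl hlB using fun q => (Finsupp.mem_span_image_iff_linearCombination Dᵐᵒᵖ).1 (hB q)
    refine ⟨Matrix.of fun p q => (l q p).unop, fun p q hqp => ?_, ?_⟩
    · simp [(Finsupp.mem_supported' _ _).1 (hl q) p (not_le.2 (Fin.lt_def.2 hqp))]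
    · ext i q
      have h := hlB q
      rw [Finsupp.linearCombination_apply (R := Dᵐᵒᵖ) (v := (Aᵀ : Fin (∑ t, N t) → Fin m → D)),
        Finsupp.sum_fintype _ _ (by simp)] at h
      simpa [Matrix.mul_apply, Finset.sum_apply] using (congrFun h i).symm

theorem blockColsIn_inj (hN : ∀ j, 0 < N j) {W W' : Fin s → Submodule Dᵐᵒᵖ (Fin m → D)} :
    blockColsIn N W = blockColsIn N W' ↔ W = W' := by
  refine ⟨fun h => ?_, congrArg _⟩
  have hle : ∀ {W W' : Fin s → Submodule Dᵐᵒᵖ (Fin m → D)},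
      blockColsIn N W ⊆ blockColsIn N W' → ∀ j, W j ≤ W' j := by
    intro W W' h j x hx
    let q := blockIdx N j ⟨0, hN j⟩
    let B : Matrix (Fin m) (Fin (∑ t, N t)) D := (Matrix.of (Pi.single q x))ᵀ
    have hcol : ∀ p, Bᵀ p = (Pi.single q x : Fin (∑ t, N t) → Fin m → D) p := fun _ => rfl
    have hB : B ∈ blockColsIn N W := fun p => by
      rw [hcol]
      by_cases hp : p = q
      · subst hp
        simpa [q] using hx
      · simp [hp]
    simpa [hcol, q] using h hB q
  exact funext fun j => le_antisymm (hle h.subset j) (hle h.symm.subset j)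

theorem isNest_of_mem_blockColsIn {ι : Type*} {r : ℕ} {M : Fin r → ℕ}
    {C : Fin s → Matrix (Fin (∑ t, M t)) ι D}
    (hblk : ∀ (j : Fin s) (i : Fin r), (j : ℕ) < (i : ℕ) →
      ∀ (a : Fin (M i)) (q : ι), C j (blockIdx M i a) q = 0)
    {A : Matrix (Fin (∑ t, M t)) (Fin (∑ t, N t)) D} (hA : A ∈ blockColsIn N fun j => RCS (C j)) :
    IsNest M N A :=
  fun i j a b hji => apply_eq_zero_of_mem_RCS (hblk j i hji a) (by simpa using hA (blockIdx N j b))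

end BlockColumnConditions

theorem rightSubmodule_nest_principal_iff_rank_cond_general
    (D : Type*) [DivisionRing D] (r s : ℕ) (M : Fin r → ℕ) (N : Fin s → ℕ)
    (hN : ∀ j, 0 < N j)
    (J : AddSubgroup (Matrix (Fin (∑ t, M t)) (Fin (∑ t, N t)) D))
    (C : Fin s → Matrix (Fin (∑ t, M t)) (Fin (∑ t, M t)) D)
    (hasc : ∀ (j : Fin s) (hj : (j : ℕ) + 1 < s), RCS (C j) ≤ RCS (C ⟨(j : ℕ) + 1, hj⟩))
    (hblk : ∀ (j : Fin s) (i : Fin r), (j : ℕ) < (i : ℕ) →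
      ∀ (a : Fin (M i)) (q : Fin (∑ t, M t)), C j (blockIdx M i a) q = 0)
    (hJdef : (J : Set (Matrix (Fin (∑ t, M t)) (Fin (∑ t, N t)) D)) =
      {A | ∀ j : Fin s, ∃ Y : Matrix (Fin (∑ t, M t)) (Fin (N j)) D,
        blockCol N A j = C j * Y})
    (k : Fin s) (hk' : ∀ j : Fin s, (j : ℕ) < (k : ℕ) → C j = 0) :
    (∃ A : Matrix (Fin (∑ t, M t)) (Fin (∑ t, N t)) D, IsNest M N A ∧
        (J : Set (Matrix (Fin (∑ t, M t)) (Fin (∑ t, N t)) D)) =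
          {B | ∃ Q : Matrix (Fin (∑ t, N t)) (Fin (∑ t, N t)) D,
            IsNest N N Q ∧ B = A * Q}) ↔
      ∀ j : Fin s, (k : ℕ) ≤ (j : ℕ) →
        Module.finrank Dᵐᵒᵖ (RCS (C j)) -
            (if hj : 0 < (j : ℕ) then
              Module.finrank Dᵐᵒᵖ
                (RCS (C ⟨(j : ℕ) - 1, lt_of_le_of_lt (Nat.pred_le _) j.2⟩)) else 0)
          ≤ N j := by
  have hmono : Monotone fun j => RCS (C j) := monotone_fin_of_le_succ hasc
  have hprev : ∀ j : Fin s, finrank Dᵐᵒᵖ ↥(⨆ i < j, RCS (C i)) =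
      if hj : 0 < (j : ℕ) then finrank Dᵐᵒᵖ (RCS (C ⟨(j : ℕ) - 1, by omega⟩)) else 0 := by
    intro j
    rw [hmono.iSup_lt_eq_dite]
    by_cases hj : 0 < (j : ℕ)
    · rw [dif_pos hj, dif_pos hj]
    · rw [dif_neg hj, dif_neg hj, finrank_bot]
  have hnest : ∀ A, cumColSpace N A = (fun j => RCS (C j)) → IsNest M N A := fun A hA =>
    isNest_of_mem_blockColsIn hblk (hA ▸ transpose_mem_blockColsIn_cumColSpace A)
  simp_rw [hJdef, setOf_blockCol_eq_mul_eq_blockColsIn, setOf_mul_isNest_eq_blockColsIn,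
    blockColsIn_inj hN, eq_comm (a := fun j => RCS (C j))]
  rw [exists_congr fun A => and_iff_right_of_imp (hnest A), exists_cumColSpace_eq_iff]
  simp only [hmono, true_and, hprev]
  refine forall_congr' fun j => ⟨fun h _ => by omega, fun h => ?_⟩
  by_cases hkj : (k : ℕ) ≤ j
  · have := h hkj
    omega
  · rw [hk' j (by omega), RCS_zero, finrank_bot]
    exact Nat.zero_le _

/-- A nonzero right submodule `J` of `T_{(M,N)}(D)` with associated
sequence `(C_1, …, C_s)` and smallest index `k` with `C_k ≠ 0` is principal (i.e.
`J = A·T_N` for some `A ∈ T_{(M,N)}(D)`) iff `rank(C_j) − rank(C_{j−1}) ≤ n_j` for every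
`k ≤ j ≤ s` (with `C_{k−1} := 0` if `k = 1`). -/
theorem rightSubmodule_nest_principal_iff_rank_cond
    (D : Type*) [DivisionRing D] (r s : ℕ) (M : Fin r → ℕ) (N : Fin s → ℕ)
    (hM : ∀ i, 0 < M i) (hN : ∀ j, 0 < N j)
    (J : AddSubgroup (Matrix (Fin (∑ t, M t)) (Fin (∑ t, N t)) D))
    (hJne : J ≠ ⊥)
    (hJT : ∀ A ∈ J, IsNest M N A)
    (hJ : ∀ (A : Matrix (Fin (∑ t, M t)) (Fin (∑ t, N t)) D)
      (Q : Matrix (Fin (∑ t, N t)) (Fin (∑ t, N t)) D),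
      IsNest N N Q → A ∈ J → A * Q ∈ J)
    (C : Fin s → Matrix (Fin (∑ t, M t)) (Fin (∑ t, M t)) D)
    (hCE : ∀ j, IsColReducedEchelon (C j))
    (hasc : ∀ (j : Fin s) (hj : (j : ℕ) + 1 < s), RCS (C j) ≤ RCS (C ⟨(j : ℕ) + 1, hj⟩))
    (hblk : ∀ (j : Fin s) (i : Fin r), (j : ℕ) < (i : ℕ) →
      ∀ (a : Fin (M i)) (q : Fin (∑ t, M t)), C j (blockIdx M i a) q = 0)
    (hJdef : (J : Set (Matrix (Fin (∑ t, M t)) (Fin (∑ t, N t)) D)) =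
      {A | ∀ j : Fin s, ∃ Y : Matrix (Fin (∑ t, M t)) (Fin (N j)) D,
        blockCol N A j = C j * Y})
    (k : Fin s) (hk : C k ≠ 0) (hk' : ∀ j : Fin s, (j : ℕ) < (k : ℕ) → C j = 0) :
    (∃ A : Matrix (Fin (∑ t, M t)) (Fin (∑ t, N t)) D, IsNest M N A ∧
        (J : Set (Matrix (Fin (∑ t, M t)) (Fin (∑ t, N t)) D)) =
          {B | ∃ Q : Matrix (Fin (∑ t, N t)) (Fin (∑ t, N t)) D,
            IsNest N N Q ∧ B = A * Q}) ↔
      ∀ j : Fin s, (k : ℕ) ≤ (j : ℕ) →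
        Module.finrank Dᵐᵒᵖ (RCS (C j)) -
            (if hj : 0 < (j : ℕ) then
              Module.finrank Dᵐᵒᵖ
                (RCS (C ⟨(j : ℕ) - 1, lt_of_le_of_lt (Nat.pred_le _) j.2⟩)) else 0)
          ≤ N j :=
  rightSubmodule_nest_principal_iff_rank_cond_general D r s M N hN J C hasc hblk hJdef k hk'
end

section
/- Let D be a division ring, m, n positive integers, and J a nonzero left submodule of the set T_{m×n}(D) of upper triangular m×n matrices (an additive subgroup with T_m(D)·J ⊆ J), with associated unique sequence (R_1,…,R_m) of left row reduced echelon matrices in M_n(D). Let 1 ≤ k ≤ m be the largest index with R_k ≠ 0 and set R_{k+1} := 0 if k = m. Then J is principal (J = T_m(D)·A for some A ∈ T_{m×n}(D)) if and only if rank(R_i) − rank(R_{i+1}) ∈ {0, 1} for every 1 ≤ i ≤ k. -/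
/-! With `W i = LRS (R i)`, the module `J` consists of the matrices whose `i`-th row lies in
`W i`, while `T_m(D) · A` consists of those whose `i`-th row lies in the span of rows `i, …, m`
of `A`. So `J` is principal iff `W 1 ⊇ ⋯ ⊇ W m ⊇ 0` is the chain of tail spans of one
sequence of vectors, i.e. iff each `W i` is obtained from `W (i + 1)` by adjoining at most one
vector, which is exactly the condition `rank W i ≤ rank W (i + 1) + 1`. -/

open Matrix Pointwise

open Set Submodule Module

section Chain

variable {D V : Type*} [DivisionRing D] [AddCommGroup V] [Module D V] {m : ℕ}

theorem exists_eq_sup_span_singleton_iff [FiniteDimensional D V] {N W : Submodule D V}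
    (hNW : N ≤ W) : (∃ v, W = N ⊔ span D {v}) ↔ finrank D W ≤ finrank D N + 1 := by
  constructor
  · rintro ⟨v, rfl⟩
    calc finrank D ↥(N ⊔ span D {v}) ≤ finrank D N + finrank D (span D {v}) :=
          finrank_add_le_finrank_add_finrank _ _
      _ ≤ finrank D N + 1 := by
          gcongr
          simpa using finrank_span_le_card (R := D) ({v} : Set V)
  · intro hW
    by_cases hWN : W ≤ N
    · exact ⟨0, by rw [span_zero_singleton, sup_bot_eq, le_antisymm hWN hNW]⟩
    obtain ⟨v, hvW, hvN⟩ := SetLike.not_le_iff_exists.1 hWN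
    refine ⟨v, (eq_of_le_of_finrank_le (sup_le hNW ((span_singleton_le_iff_mem v W).2 hvW))
      ?_).symm⟩
    rw [finrank_sup_span_singleton hvN]
    exact hW

def nextOrBot (W : Fin m → Submodule D V) (i : Fin m) : Submodule D V :=
  if h : (i : ℕ) + 1 < m then W ⟨i + 1, h⟩ else ⊥

theorem finrank_nextOrBot (W : Fin m → Submodule D V) (i : Fin m) :
    finrank D (nextOrBot W i) =
      if h : (i : ℕ) + 1 < m then finrank D (W ⟨i + 1, h⟩) else 0 := by
  by_cases h : (i : ℕ) + 1 < m
  · rw [nextOrBot, dif_pos h, dif_pos h]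
  · rw [nextOrBot, dif_neg h, dif_neg h, finrank_bot]

theorem nextOrBot_le {W : Fin m → Submodule D V}
    (hW : ∀ (i : Fin m) (h : (i : ℕ) + 1 < m), W ⟨i + 1, h⟩ ≤ W i) (i : Fin m) :
    nextOrBot W i ≤ W i := by
  unfold nextOrBot
  split_ifs with h
  exacts [hW i h, bot_le]

theorem span_image_Ici (a : Fin m → V) (i : Fin m) :
    span D (a '' Ici i) = span D (a '' Ioi i) ⊔ span D {a i} := by
  rw [← Ioi_insert, image_insert_eq, span_insert, sup_comm]

theorem nextOrBot_eq_span_image_Ioi {W : Fin m → Submodule D V} {a : Fin m → V} {i : Fin m}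
    (h : ∀ j, i < j → W j = span D (a '' Ici j)) :
    nextOrBot W i = span D (a '' Ioi i) := by
  unfold nextOrBot
  split_ifs with hi
  · have hIci : Ici (⟨i + 1, hi⟩ : Fin m) = Ioi i := by
      ext j
      simp only [mem_Ici, mem_Ioi, Fin.le_def, Fin.lt_def]
      omega
    rw [h _ (Fin.lt_def.2 (Nat.lt_succ_self _)), hIci]
  · have : Ioi i = ∅ := eq_empty_of_forall_notMem fun j (hj : i < j) => hi (by omega)
    rw [this, image_empty, span_empty]

theorem forall_eq_span_image_Ici_iff (W : Fin m → Submodule D V) (a : Fin m → V) :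
    (∀ i, W i = span D (a '' Ici i)) ↔ ∀ i, W i = nextOrBot W i ⊔ span D {a i} := by
  constructor
  · intro h i
    rw [nextOrBot_eq_span_image_Ioi fun j _ => h j, ← span_image_Ici, h i]
  · intro h i
    induction i using WellFoundedGT.induction with
    | _ i ih => rw [h i, span_image_Ici, nextOrBot_eq_span_image_Ioi ih]

theorem exists_eq_span_image_Ici_iff_finrank_le [FiniteDimensional D V]
    {W : Fin m → Submodule D V}
    (hW : ∀ (i : Fin m) (h : (i : ℕ) + 1 < m), W ⟨i + 1, h⟩ ≤ W i) :
    (∃ a : Fin m → V, ∀ i, W i = span D (a '' Ici i)) ↔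
      ∀ i, finrank D (W i) ≤ finrank D (nextOrBot W i) + 1 := by
  simp_rw [forall_eq_span_image_Ici_iff W]
  exact Classical.skolem.symm.trans
    (forall_congr' fun i => exists_eq_sup_span_singleton_iff (nextOrBot_le hW i))

end Chain

theorem mem_span_image_iff_exists_sum {ι R M : Type*} [Fintype ι] [Semiring R] [AddCommMonoid M]
    [Module R M] (v : ι → M) (s : Set ι) (x : M) :
    x ∈ span R (v '' s) ↔ ∃ c : ι → R, (∀ j ∉ s, c j = 0) ∧ ∑ j, c j • v j = x := by
  rw [Finsupp.mem_span_image_iff_linearCombination]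
  constructor
  · rintro ⟨l, hl, rfl⟩
    refine ⟨l, fun j hj => Finsupp.notMem_support_iff.1 fun hjl => hj (hl hjl), ?_⟩
    rw [Finsupp.linearCombination_apply, Finsupp.sum_fintype _ _ fun j => zero_smul R (v j)]
  · rintro ⟨c, hc, rfl⟩
    refine ⟨Finsupp.equivFunOnFinite.symm c, fun j hj => ?_, ?_⟩
    · by_contra hjs
      exact (Finsupp.mem_support_iff.1 hj) (hc j hjs)
    · rw [Finsupp.linearCombination_apply, Finsupp.sum_fintype _ _ fun j => zero_smul R (v j)]
      rfl

theorem setOf_forall_mem_eq_iff {ι R M : Type*} [DecidableEq ι] [Semiring R] [AddCommMonoid M]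
    [Module R M] {W U : ι → Submodule R M} :
    {B : ι → M | ∀ i, B i ∈ W i} = {B | ∀ i, B i ∈ U i} ↔ W = U := by
  refine ⟨fun h => funext fun i => SetLike.ext fun v => ?_, fun h => h ▸ rfl⟩
  have hsingle : ∀ V : ι → Submodule R M, (Pi.single i v ∈ {B : ι → M | ∀ i, B i ∈ V i}) ↔
      v ∈ V i := by
    refine fun V => ⟨fun hv => by simpa using hv i, fun hv j => ?_⟩
    rcases eq_or_ne j i with rfl | hji
    · simpa using hv
    · simp [Pi.single_eq_of_ne hji]
  rw [← hsingle W, ← hsingle U, h]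

section UpperTriangular

variable {D : Type*} [DivisionRing D] {m n : ℕ}

theorem LRS_zero {ι : Type*} : LRS (0 : Matrix ι (Fin n) D) = ⊥ :=
  span_eq_bot.2 fun _ ⟨_, hp⟩ => hp ▸ rfl

theorem exists_isUpperTriangular_mul_eq_iff (A B : Matrix (Fin m) (Fin n) D) :
    (∃ P : Matrix (Fin m) (Fin m) D, _root_.IsUpperTriangular P ∧ B = P * A) ↔
      ∀ i, B i ∈ span D (A '' Ici i) := by
  have hrow : ∀ (P : Matrix (Fin m) (Fin m) D) i, (P * A) i = ∑ j, P i j • A j := fun P i => by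
    rw [mul_apply_eq_vecMul, vecMul_eq_sum]
  rw [forall_congr' fun i => mem_span_image_iff_exists_sum A (Ici i) (B i)]
  simp_rw [mem_Ici, Fin.le_def, not_le]
  constructor
  · rintro ⟨P, hP, rfl⟩ i
    exact ⟨P i, fun j hj => hP i j hj, (hrow P i).symm⟩
  · intro h
    choose P hP hPB using h
    exact ⟨Matrix.of P, fun i j hji => hP i j hji,
      funext fun i => (hPB i).symm.trans (hrow _ i).symm⟩

theorem setOf_forall_mem_eq_setOf_upperTriangular_mul_iff
    (W : Fin m → Submodule D (Fin n → D)) (A : Matrix (Fin m) (Fin n) D) :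
    {B : Matrix (Fin m) (Fin n) D | ∀ i, B i ∈ W i} =
        {B | ∃ P : Matrix (Fin m) (Fin m) D, _root_.IsUpperTriangular P ∧ B = P * A} ↔
      ∀ i, W i = span D (A '' Ici i) := by
  simp_rw [exists_isUpperTriangular_mul_eq_iff]
  exact setOf_forall_mem_eq_iff.trans funext_iff

end UpperTriangular

theorem leftSubmodule_upperTriangular_principal_iff_rank_cond_general
    (D : Type*) [DivisionRing D] (m n : ℕ)
    (J : AddSubgroup (Matrix (Fin m) (Fin n) D))
    (hJT : ∀ A ∈ J, IsUpperTriangular A)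
    (R : Fin m → Matrix (Fin n) (Fin n) D)
    (hdesc : ∀ (i : Fin m) (hi : (i : ℕ) + 1 < m), LRS (R ⟨(i : ℕ) + 1, hi⟩) ≤ LRS (R i))
    (hJdef : (J : Set (Matrix (Fin m) (Fin n) D)) =
      {A | ∀ i : Fin m, A i ∈ LRS (R i)})
    (k : Fin m) (hk' : ∀ i : Fin m, (k : ℕ) < (i : ℕ) → R i = 0) :
    (∃ A : Matrix (Fin m) (Fin n) D, IsUpperTriangular A ∧
        (J : Set (Matrix (Fin m) (Fin n) D)) =
          {B | ∃ P : Matrix (Fin m) (Fin m) D, _root_.IsUpperTriangular P ∧ B = P * A}) ↔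
      ∀ i : Fin m, (i : ℕ) ≤ (k : ℕ) →
        (Module.finrank D (LRS (R i)) -
            (if hi : (i : ℕ) + 1 < m then
              Module.finrank D (LRS (R ⟨(i : ℕ) + 1, hi⟩)) else 0) = 0 ∨
         Module.finrank D (LRS (R i)) -
            (if hi : (i : ℕ) + 1 < m then
              Module.finrank D (LRS (R ⟨(i : ℕ) + 1, hi⟩)) else 0) = 1) := by
  have hmem : ∀ B, B ∈ J ↔ ∀ i, B i ∈ LRS (R i) := fun B => by rw [← SetLike.mem_coe, hJdef]; rfl
  rw [hJdef]
  calc _ ↔ ∃ a : Fin m → Fin n → D, ∀ i, LRS (R i) = span D (a '' Ici i) := by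
        simp_rw [setOf_forall_mem_eq_setOf_upperTriangular_mul_iff]
        refine ⟨fun ⟨A, _, hA⟩ => ⟨A, hA⟩, fun ⟨A, hA⟩ => ⟨A, hJT A ((hmem A).2 fun i => ?_), hA⟩⟩
        rw [hA i]
        exact subset_span ⟨i, self_mem_Ici, rfl⟩
    _ ↔ ∀ i, finrank D (LRS (R i)) ≤ finrank D (nextOrBot (fun j => LRS (R j)) i) + 1 :=
        exists_eq_span_image_Ici_iff_finrank_le hdesc
    _ ↔ _ := forall_congr' fun i => ?_
  rw [finrank_nextOrBot]
  by_cases hik : (i : ℕ) ≤ k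
  · simp only [hik, true_implies]
    -- truncated subtraction: `a - b ∈ {0, 1}` iff `a ≤ b + 1`
    omega
  · rw [hk' i (by omega), LRS_zero, finrank_bot]
    exact iff_of_true (Nat.zero_le _) fun h => absurd h hik

/-- A nonzero left submodule `J` of the upper triangular matrices
`T_{m×n}(D)` with associated sequence `(R_1, …, R_m)` and largest index `k` with
`R_k ≠ 0` is principal (i.e. `J = T_m(D)·A` for some upper triangular `A`) iff
`rank(R_i) − rank(R_{i+1}) ∈ {0, 1}` for every `i ≤ k` (with `R_{k+1} := 0` if `k = m`). -/
theorem leftSubmodule_upperTriangular_principal_iff_rank_cond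
    (D : Type*) [DivisionRing D] (m n : ℕ) (hm : 0 < m) (hn : 0 < n)
    (J : AddSubgroup (Matrix (Fin m) (Fin n) D))
    (hJne : J ≠ ⊥)
    (hJT : ∀ A ∈ J, IsUpperTriangular A)
    (hJ : ∀ (P : Matrix (Fin m) (Fin m) D) (B : Matrix (Fin m) (Fin n) D),
      _root_.IsUpperTriangular P → B ∈ J → P * B ∈ J)
    (R : Fin m → Matrix (Fin n) (Fin n) D)
    (hRE : ∀ i, IsRowReducedEchelon (R i))
    (hdesc : ∀ (i : Fin m) (hi : (i : ℕ) + 1 < m), LRS (R ⟨(i : ℕ) + 1, hi⟩) ≤ LRS (R i))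
    (hblk : ∀ (i : Fin m) (p q : Fin n), (q : ℕ) < (i : ℕ) → R i p q = 0)
    (hJdef : (J : Set (Matrix (Fin m) (Fin n) D)) =
      {A | ∀ i : Fin m, A i ∈ LRS (R i)})
    (k : Fin m) (hk : R k ≠ 0) (hk' : ∀ i : Fin m, (k : ℕ) < (i : ℕ) → R i = 0) :
    (∃ A : Matrix (Fin m) (Fin n) D, IsUpperTriangular A ∧
        (J : Set (Matrix (Fin m) (Fin n) D)) =
          {B | ∃ P : Matrix (Fin m) (Fin m) D, _root_.IsUpperTriangular P ∧ B = P * A}) ↔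
      ∀ i : Fin m, (i : ℕ) ≤ (k : ℕ) →
        (Module.finrank D (LRS (R i)) -
            (if hi : (i : ℕ) + 1 < m then
              Module.finrank D (LRS (R ⟨(i : ℕ) + 1, hi⟩)) else 0) = 0 ∨
         Module.finrank D (LRS (R i)) -
            (if hi : (i : ℕ) + 1 < m then
              Module.finrank D (LRS (R ⟨(i : ℕ) + 1, hi⟩)) else 0) = 1) :=
  leftSubmodule_upperTriangular_principal_iff_rank_cond_general D m n J hJT R hdesc hJdef k hk'
end
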